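/- arXiv:2112.08768 — 11 statements merged into one kernel-verified Lean document; each statement's English description precedes it below -/
import Mathlib

section
/- For any positive integers n1, n2, n3 ≥ 2, the metric dimension of the three-dimensional grid P_{n1}□P_{n2}□P_{n3} equals 3; moreover, the set of three corners {(0,0,0), (n1−1,0,0), (0,n2−1,0)} is a resolving set of cardinality 3. -/
/-- Vertices of the 3D grid `P_{n1} □ P_{n2} □ P_{n3}`. -/
abbrev GridV (n1 n2 n3 : ℕ) := Fin n1 × Fin n2 × Fin n3

/-- Graph distance in the 3D grid: the ℓ₁ (Manhattan) distance. -/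
def gridDist {n1 n2 n3 : ℕ} (u v : GridV n1 n2 n3) : ℕ :=
  ((u.1 : ℤ) - (v.1 : ℤ)).natAbs + ((u.2.1 : ℤ) - (v.2.1 : ℤ)).natAbs +
    ((u.2.2 : ℤ) - (v.2.2 : ℤ)).natAbs

/-- A vertex `w` resolves the pair `u`, `v`. -/
abbrev gridResolves {n1 n2 n3 : ℕ} (w u v : GridV n1 n2 n3) : Prop :=
  gridDist w u ≠ gridDist w v

/-- `S` is a resolving set for the 3D grid. -/
def IsResolvingSet {n1 n2 n3 : ℕ} (S : Set (GridV n1 n2 n3)) : Prop :=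
  ∀ u v : GridV n1 n2 n3, u ≠ v → ∃ w ∈ S, gridResolves w u v

/-- `S` is an `m`-resolving set: each pair of distinct vertices is resolved by
at least `m` vertices of `S`. -/
def IsKResolvingSet {n1 n2 n3 : ℕ} (m : ℕ) (S : Finset (GridV n1 n2 n3)) : Prop :=
  ∀ u v : GridV n1 n2 n3, u ≠ v →
    m ≤ (S.filter (fun w => gridResolves w u v)).card

/-- The metric dimension of the 3D grid. -/
noncomputable def gridMetricDim (n1 n2 n3 : ℕ) : ℕ :=
  sInf { m | ∃ S : Finset (GridV n1 n2 n3),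
    IsResolvingSet (S : Set (GridV n1 n2 n3)) ∧ S.card = m }

/-- The `m`-metric dimension of the 3D grid. -/
noncomputable def gridKMetricDim (m n1 n2 n3 : ℕ) : ℕ :=
  sInf { c | ∃ S : Finset (GridV n1 n2 n3), IsKResolvingSet m S ∧ S.card = c }

/-- `F(n1,n2,n3)`: the boundary vertices of the grid. -/
def gridBoundary (n1 n2 n3 : ℕ) : Finset (GridV n1 n2 n3) :=
  Finset.univ.filter (fun z =>
    z.1.val = 0 ∨ z.1.val = n1 - 1 ∨ z.2.1.val = 0 ∨ z.2.1.val = n2 - 1 ∨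
    z.2.2.val = 0 ∨ z.2.2.val = n3 - 1)

/-- `α_M(n1,n2,n3) = min{n1(n2+n3−2), n2(n1+n3−2), n3(n1+n2−2)}`. -/
def alphaM (n1 n2 n3 : ℕ) : ℕ :=
  min (n1 * (n2 + n3 - 2)) (min (n2 * (n1 + n3 - 2)) (n3 * (n1 + n2 - 2)))

/-- `α_m(n1,n2,n3) = 2(n1+n2+n3) − 8`. -/
def alpham (n1 n2 n3 : ℕ) : ℕ := 2 * (n1 + n2 + n3) - 8

/-- 2D key lemma: two points of "the same type" in a 2D grid always have an
unresolved pair. -/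
lemma key2 (n m : ℕ) (hn : 2 ≤ n) (hm : 2 ≤ m) (a1 b1 a2 b2 : ℕ)
    (ha1 : a1 < n) (hb1 : b1 < n) (ha2 : a2 < m) (hb2 : b2 < m)
    (hty : a1 = b1 ↔ a2 = b2) :
    ∃ u1 v1 u2 v2 : ℕ, u1 < n ∧ v1 < n ∧ u2 < m ∧ v2 < m ∧ u1 ≠ v1 ∧
      ((a1:ℤ)-u1).natAbs + ((a2:ℤ)-u2).natAbs = ((a1:ℤ)-v1).natAbs + ((a2:ℤ)-v2).natAbs ∧
      ((b1:ℤ)-u1).natAbs + ((b2:ℤ)-u2).natAbs = ((b1:ℤ)-v1).natAbs + ((b2:ℤ)-v2).natAbs := by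
  rcases lt_trichotomy a1 b1 with hc1 | hc1 | hc1
  · rcases lt_trichotomy a2 b2 with hc2 | hc2 | hc2
    · exact ⟨a1+1, a1, a2, a2+1, by omega, by omega, by omega, by omega, by omega, by omega, by omega⟩
    · omega
    · exact ⟨a1+1, a1, b2+1, b2, by omega, by omega, by omega, by omega, by omega, by omega, by omega⟩
  · have hc2 : a2 = b2 := hty.mp hc1
    subst hc1; subst hc2
    rcases Nat.eq_zero_or_pos a1 with h0 | h0
    · rcases Nat.eq_zero_or_pos a2 with g0 | g0
      · exact ⟨1, 0, 0, 1, by omega, by omega, by omega, by omega, by omega, by omega, by omega⟩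
      · exact ⟨1, 0, a2, a2-1, by omega, by omega, by omega, by omega, by omega, by omega, by omega⟩
    · rcases Nat.eq_zero_or_pos a2 with g0 | g0
      · exact ⟨a1-1, a1, 0, 1, by omega, by omega, by omega, by omega, by omega, by omega, by omega⟩
      · exact ⟨a1-1, a1, a2, a2-1, by omega, by omega, by omega, by omega, by omega, by omega, by omega⟩
  · rcases lt_trichotomy a2 b2 with hc2 | hc2 | hc2
    · exact ⟨b1+1, b1, a2+1, a2, by omega, by omega, by omega, by omega, by omega, by omega, by omega⟩
    · omega
    · exact ⟨b1+1, b1, b2, b2+1, by omega, by omega, by omega, by omega, by omega, by omega, by omega⟩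

/-- 3D key lemma on naturals. -/
lemma key3 (n1 n2 n3 : ℕ) (h1 : 2 ≤ n1) (h2 : 2 ≤ n2) (h3 : 2 ≤ n3)
    (a1 b1 a2 b2 a3 b3 : ℕ) (ha1 : a1 < n1) (hb1 : b1 < n1) (ha2 : a2 < n2) (hb2 : b2 < n2)
    (ha3 : a3 < n3) (hb3 : b3 < n3) :
    ∃ u1 v1 u2 v2 u3 v3 : ℕ, u1 < n1 ∧ v1 < n1 ∧ u2 < n2 ∧ v2 < n2 ∧ u3 < n3 ∧ v3 < n3 ∧
      (u1 ≠ v1 ∨ u2 ≠ v2 ∨ u3 ≠ v3) ∧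
      ((a1:ℤ)-u1).natAbs + ((a2:ℤ)-u2).natAbs + ((a3:ℤ)-u3).natAbs =
        ((a1:ℤ)-v1).natAbs + ((a2:ℤ)-v2).natAbs + ((a3:ℤ)-v3).natAbs ∧
      ((b1:ℤ)-u1).natAbs + ((b2:ℤ)-u2).natAbs + ((b3:ℤ)-u3).natAbs =
        ((b1:ℤ)-v1).natAbs + ((b2:ℤ)-v2).natAbs + ((b3:ℤ)-v3).natAbs := by
  by_cases hty12 : (a1 = b1 ↔ a2 = b2)
  · obtain ⟨u1, v1, u2, v2, c1, c2, c3, c4, c5, c6, c7⟩ :=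
      key2 n1 n2 h1 h2 a1 b1 a2 b2 ha1 hb1 ha2 hb2 hty12
    exact ⟨u1, v1, u2, v2, a3, a3, c1, c2, c3, c4, ha3, ha3, Or.inl c5, by omega, by omega⟩
  · by_cases hty13 : (a1 = b1 ↔ a3 = b3)
    · obtain ⟨u1, v1, u3, v3, c1, c2, c3, c4, c5, c6, c7⟩ :=
        key2 n1 n3 h1 h3 a1 b1 a3 b3 ha1 hb1 ha3 hb3 hty13
      exact ⟨u1, v1, a2, a2, u3, v3, c1, c2, ha2, ha2, c3, c4, Or.inl c5, by omega, by omega⟩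
    · have hty23 : (a2 = b2 ↔ a3 = b3) := by tauto
      obtain ⟨u2, v2, u3, v3, c1, c2, c3, c4, c5, c6, c7⟩ :=
        key2 n2 n3 h2 h3 a2 b2 a3 b3 ha2 hb2 ha3 hb3 hty23
      exact ⟨a1, a1, u2, v2, u3, v3, ha1, ha1, c1, c2, c3, c4, Or.inr (Or.inl c5), by omega, by omega⟩

/-- Any two vertices fail to resolve some pair. -/
lemma exists_unresolved {n1 n2 n3 : ℕ} (h1 : 2 ≤ n1) (h2 : 2 ≤ n2) (h3 : 2 ≤ n3)
    (a b : GridV n1 n2 n3) :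
    ∃ u v : GridV n1 n2 n3, u ≠ v ∧ gridDist a u = gridDist a v ∧
      gridDist b u = gridDist b v := by
  obtain ⟨⟨a1, ha1⟩, ⟨a2, ha2⟩, ⟨a3, ha3⟩⟩ := a
  obtain ⟨⟨b1, hb1⟩, ⟨b2, hb2⟩, ⟨b3, hb3⟩⟩ := b
  obtain ⟨u1, v1, u2, v2, u3, v3, c1, c2, c3, c4, c5, c6, hne, e1, e2⟩ :=
    key3 n1 n2 n3 h1 h2 h3 a1 b1 a2 b2 a3 b3 ha1 hb1 ha2 hb2 ha3 hb3
  refine ⟨(⟨u1, c1⟩, ⟨u2, c3⟩, ⟨u3, c5⟩), (⟨v1, c2⟩, ⟨v2, c4⟩, ⟨v3, c6⟩), ?_, ?_, ?_⟩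
  · simp only [ne_eq, Prod.mk.injEq, Fin.mk.injEq, not_and]
    intro h h'
    rcases hne with h'' | h'' | h'' <;> simp_all
  · simpa [gridDist] using e1
  · simpa [gridDist] using e2

lemma corners_resolve (n1 n2 n3 : ℕ) (h1 : 2 ≤ n1) (h2 : 2 ≤ n2) (h3 : 2 ≤ n3) :
    IsResolvingSet
      (({((⟨0, by have _ := h1; omega⟩ : Fin n1), (⟨0, by have _ := h1; omega⟩ : Fin n2), (⟨0, by have _ := h1; omega⟩ : Fin n3)),
         ((⟨n1 - 1, by have _ := h1; omega⟩ : Fin n1), (⟨0, by have _ := h1; omega⟩ : Fin n2), (⟨0, by have _ := h1; omega⟩ : Fin n3)),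
         ((⟨0, by have _ := h1; omega⟩ : Fin n1), (⟨n2 - 1, by have _ := h1; omega⟩ : Fin n2), (⟨0, by have _ := h1; omega⟩ : Fin n3))} :
        Finset (GridV n1 n2 n3)) : Set (GridV n1 n2 n3)) := by
  intro u v huv
  by_contra hcon
  push_neg at hcon
  simp only [Finset.coe_insert, Finset.coe_singleton, Set.mem_insert_iff,
    Set.mem_singleton_iff, gridResolves, not_not] at hcon
  obtain ⟨⟨u1, hu1⟩, ⟨u2, hu2⟩, ⟨u3, hu3⟩⟩ := u
  obtain ⟨⟨v1, hv1⟩, ⟨v2, hv2⟩, ⟨v3, hv3⟩⟩ := v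
  have e1 := hcon _ (Or.inl rfl)
  have e2 := hcon _ (Or.inr (Or.inl rfl))
  have e3 := hcon _ (Or.inr (Or.inr rfl))
  simp only [gridDist] at e1 e2 e3
  apply huv
  simp only [Prod.mk.injEq, Fin.mk.injEq]
  omega

/-- The metric dimension of the 3D grid is 3, and the three corners
(0,0,0), (n1−1,0,0), (0,n2−1,0) form a resolving set of cardinality 3. -/
theorem grid3D_metric_dim_eq_three (n1 n2 n3 : ℕ)
    (h1 : 2 ≤ n1) (h2 : 2 ≤ n2) (h3 : 2 ≤ n3) :
    gridMetricDim n1 n2 n3 = 3 ∧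
    IsResolvingSet
      (({((⟨0, by omega⟩ : Fin n1), (⟨0, by omega⟩ : Fin n2), (⟨0, by omega⟩ : Fin n3)),
         ((⟨n1 - 1, by omega⟩ : Fin n1), (⟨0, by omega⟩ : Fin n2), (⟨0, by omega⟩ : Fin n3)),
         ((⟨0, by omega⟩ : Fin n1), (⟨n2 - 1, by omega⟩ : Fin n2), (⟨0, by omega⟩ : Fin n3))} :
        Finset (GridV n1 n2 n3)) : Set (GridV n1 n2 n3)) ∧
    ({((⟨0, by omega⟩ : Fin n1), (⟨0, by omega⟩ : Fin n2), (⟨0, by omega⟩ : Fin n3)),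
       ((⟨n1 - 1, by omega⟩ : Fin n1), (⟨0, by omega⟩ : Fin n2), (⟨0, by omega⟩ : Fin n3)),
       ((⟨0, by omega⟩ : Fin n1), (⟨n2 - 1, by omega⟩ : Fin n2), (⟨0, by omega⟩ : Fin n3))} :
      Finset (GridV n1 n2 n3)).card = 3 := by
  set c1 : GridV n1 n2 n3 := ((⟨0, by omega⟩ : Fin n1), (⟨0, by omega⟩ : Fin n2), (⟨0, by omega⟩ : Fin n3)) with hc1
  set c2 : GridV n1 n2 n3 := ((⟨n1 - 1, by omega⟩ : Fin n1), (⟨0, by omega⟩ : Fin n2), (⟨0, by omega⟩ : Fin n3)) with hc2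
  set c3 : GridV n1 n2 n3 := ((⟨0, by omega⟩ : Fin n1), (⟨n2 - 1, by omega⟩ : Fin n2), (⟨0, by omega⟩ : Fin n3)) with hc3
  have hcorners := corners_resolve n1 n2 n3 h1 h2 h3
  have hcard : ({c1, c2, c3} : Finset (GridV n1 n2 n3)).card = 3 := by
    rw [Finset.card_insert_of_notMem, Finset.card_insert_of_notMem, Finset.card_singleton]
    · simp only [Finset.mem_singleton, hc2, hc3, Prod.mk.injEq, Fin.mk.injEq, not_and]
      intro h; omega
    · simp only [Finset.mem_insert, Finset.mem_singleton, hc1, hc2, hc3, Prod.mk.injEq,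
        Fin.mk.injEq, not_or, not_and]
      constructor <;> intro h <;> omega
  have h3mem : 3 ∈ { m | ∃ S : Finset (GridV n1 n2 n3),
      IsResolvingSet (S : Set (GridV n1 n2 n3)) ∧ S.card = m } :=
    ⟨{c1, c2, c3}, hcorners, hcard⟩
  have hlow : ∀ m ∈ { m | ∃ S : Finset (GridV n1 n2 n3),
      IsResolvingSet (S : Set (GridV n1 n2 n3)) ∧ S.card = m }, 3 ≤ m := by
    rintro m ⟨S, hS, rfl⟩
    by_contra hm
    push_neg at hm
    have hcc : S.card = 0 ∨ S.card = 1 ∨ S.card = 2 := by omega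
    obtain ⟨a, b, hab⟩ : ∃ a b : GridV n1 n2 n3, ∀ w ∈ S, w = a ∨ w = b := by
      rcases hcc with h | h | h
      · exact ⟨c1, c1, fun w hw => absurd hw (by simp [Finset.card_eq_zero.mp h])⟩
      · obtain ⟨a, ha⟩ := Finset.card_eq_one.mp h
        exact ⟨a, a, fun w hw => Or.inl (by simpa [ha] using hw)⟩
      · obtain ⟨a, b, hne, hab2⟩ := Finset.card_eq_two.mp h
        exact ⟨a, b, fun w hw => by
          simpa [hab2, Finset.mem_insert, Finset.mem_singleton] using hw⟩
    obtain ⟨u, v, huv, ea, eb⟩ := exists_unresolved h1 h2 h3 a b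
    obtain ⟨w, hw, hres⟩ := hS u v huv
    rcases hab w (Finset.mem_coe.mp hw) with rfl | rfl
    · exact hres ea
    · exact hres eb
  exact ⟨le_antisymm (Nat.sInf_le h3mem) (le_csInf ⟨3, h3mem⟩ hlow), hcorners, hcard⟩
end

section
/- Let n1, n2, n3 ≥ 2 and let S be a set of vertices of the 3D grid P_{n1}□P_{n2}□P_{n3}. If there exist a1 ∈ {1,…,n1−1} and a2 ∈ {1,…,n2−1} such that pr_3(S) ⊆ R_{--}(a1,a2) ∪ R_{++}(a1,a2) or pr_3(S) ⊆ R_{-+}(a1,a2) ∪ R_{+-}(a1,a2), then S is not a resolving set for P_{n1}□P_{n2}□P_{n3}. -/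
/-- If the projection of S onto the first two coordinates lies in
R₋₋(a1,a2) ∪ R₊₊(a1,a2) or in R₋₊(a1,a2) ∪ R₊₋(a1,a2), then S is not resolving. -/
theorem grid3D_not_resolving_of_projection (n1 n2 n3 a1 a2 : ℕ)
    (h1 : 2 ≤ n1) (h2 : 2 ≤ n2) (h3 : 2 ≤ n3)
    (ha1 : 1 ≤ a1) (ha1' : a1 ≤ n1 - 1) (ha2 : 1 ≤ a2) (ha2' : a2 ≤ n2 - 1)
    (S : Set (GridV n1 n2 n3))
    (hproj :
      (∀ z ∈ S, (z.1.val < a1 ∧ z.2.1.val < a2) ∨ (a1 ≤ z.1.val ∧ a2 ≤ z.2.1.val)) ∨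
      (∀ z ∈ S, (z.1.val < a1 ∧ a2 ≤ z.2.1.val) ∨ (a1 ≤ z.1.val ∧ z.2.1.val < a2))) :
    ¬ IsResolvingSet S := by
  intro hres
  rcases hproj with hp | hp
  · obtain ⟨w, hwS, hw⟩ := hres (⟨a1, by omega⟩, ⟨a2 - 1, by omega⟩, ⟨0, by omega⟩)
      (⟨a1 - 1, by omega⟩, ⟨a2, by omega⟩, ⟨0, by omega⟩)
      (by simp [Prod.ext_iff, Fin.ext_iff]; omega)
    apply hw
    rcases hp w hwS with ⟨hx1, hx2⟩ | ⟨hx1, hx2⟩ <;>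
      · simp only [gridDist]; omega
  · obtain ⟨w, hwS, hw⟩ := hres (⟨a1 - 1, by omega⟩, ⟨a2 - 1, by omega⟩, ⟨0, by omega⟩)
      (⟨a1, by omega⟩, ⟨a2, by omega⟩, ⟨0, by omega⟩)
      (by simp [Prod.ext_iff, Fin.ext_iff]; omega)
    apply hw
    rcases hp w hwS with ⟨hx1, hx2⟩ | ⟨hx1, hx2⟩ <;>
      · simp only [gridDist]; omega
end

section
/- Let n1, n2, n3 ≥ 2 and let u = (x1,x2,x3) and v = (y1,y2,y3) be distinct vertices of the 3D grid P_{n1}□P_{n2}□P_{n3} that differ in exactly one coordinate (i.e., xi ≠ yi for exactly one index i ∈ {1,2,3}). Then at least α_M(n1,n2,n3) vertices of F(n1,n2,n3) resolve u and v. -/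

lemma cardA (n s : ℕ) :
    n - 1 ≤ (Finset.univ.filter (fun a : Fin n => 2 * a.val ≠ s)).card := by
  classical
  have h := Finset.card_filter_add_card_filter_not
    (s := (Finset.univ : Finset (Fin n))) (p := fun a : Fin n => 2 * a.val ≠ s)
  have hone : (Finset.univ.filter (fun a : Fin n => ¬(2 * a.val ≠ s))).card ≤ 1 := by
    refine Finset.card_le_one.mpr ?_
    intro a ha b hb
    simp only [Finset.mem_filter, not_not] at ha hb
    exact Fin.ext (by omega)
  have hcu : (Finset.univ : Finset (Fin n)).card = n := by simp
  omega

lemma cardInterior (m : ℕ) (hm : 2 ≤ m) :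
    (Finset.univ.filter (fun a : Fin m => a.val ≠ 0 ∧ a.val ≠ m - 1)).card ≤ m - 2 := by
  classical
  have h := Finset.card_filter_add_card_filter_not
    (s := (Finset.univ : Finset (Fin m))) (p := fun a : Fin m => a.val ≠ 0 ∧ a.val ≠ m - 1)
  have hpair : ({⟨0, by omega⟩, ⟨m - 1, by omega⟩} : Finset (Fin m)) ⊆
      Finset.univ.filter (fun a : Fin m => ¬(a.val ≠ 0 ∧ a.val ≠ m - 1)) := by
    intro a ha
    simp only [Finset.mem_insert, Finset.mem_singleton] at ha
    simp only [Finset.mem_filter, Finset.mem_univ, true_and]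
    rcases ha with rfl | rfl <;> simp
  have h2 : 2 ≤ (Finset.univ.filter (fun a : Fin m => ¬(a.val ≠ 0 ∧ a.val ≠ m - 1))).card := by
    have := Finset.card_le_card hpair
    have hcard : ({⟨0, by omega⟩, ⟨m - 1, by omega⟩} : Finset (Fin m)).card = 2 := by
      rw [Finset.card_insert_of_notMem, Finset.card_singleton]
      simp only [Finset.mem_singleton]
      intro hc
      have := Fin.val_eq_of_eq hc
      simp at this; omega
    omega
  have hcu : (Finset.univ : Finset (Fin m)).card = m := by simp
  omega

lemma cardB (m k : ℕ) (hm : 2 ≤ m) (hk : 2 ≤ k) :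
    2 * (m + k) - 4 ≤ (Finset.univ.filter (fun z : Fin m × Fin k =>
      z.1.val = 0 ∨ z.1.val = m - 1 ∨ z.2.val = 0 ∨ z.2.val = k - 1)).card := by
  classical
  have h := Finset.card_filter_add_card_filter_not
    (s := (Finset.univ : Finset (Fin m × Fin k)))
    (p := fun z : Fin m × Fin k => z.1.val = 0 ∨ z.1.val = m - 1 ∨ z.2.val = 0 ∨ z.2.val = k - 1)
  have hneg : (Finset.univ.filter (fun z : Fin m × Fin k =>
      ¬(z.1.val = 0 ∨ z.1.val = m - 1 ∨ z.2.val = 0 ∨ z.2.val = k - 1))).card ≤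
      (m - 2) * (k - 2) := by
    have heq : (Finset.univ.filter (fun z : Fin m × Fin k =>
        ¬(z.1.val = 0 ∨ z.1.val = m - 1 ∨ z.2.val = 0 ∨ z.2.val = k - 1))) =
        (Finset.univ.filter (fun a : Fin m => a.val ≠ 0 ∧ a.val ≠ m - 1)) ×ˢ
        (Finset.univ.filter (fun b : Fin k => b.val ≠ 0 ∧ b.val ≠ k - 1)) := by
      ext z
      simp only [Finset.mem_filter, Finset.mem_univ, true_and, Finset.mem_product]
      tauto
    rw [heq, Finset.card_product]
    exact Nat.mul_le_mul (cardInterior m hm) (cardInterior k hk)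
  have hcu : (Finset.univ : Finset (Fin m × Fin k)).card = m * k := by simp
  obtain ⟨a, rfl⟩ := Nat.exists_eq_add_of_le hm
  obtain ⟨b, rfl⟩ := Nat.exists_eq_add_of_le hk
  have hexp : (2 + a) * (2 + b) = a * b + 2 * a + 2 * b + 4 := by ring
  have hle : ((2 + a) - 2) * ((2 + b) - 2) = a * b := by simp
  omega

lemma main_count (n m k : ℕ) (hn : 2 ≤ n) (hm : 2 ≤ m) (hk : 2 ≤ k) (s : ℕ) :
    n * (m + k - 2) ≤ (Finset.univ.filter (fun z : Fin n × Fin m × Fin k =>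
      2 * z.1.val ≠ s ∧
      (z.2.1.val = 0 ∨ z.2.1.val = m - 1 ∨ z.2.2.val = 0 ∨ z.2.2.val = k - 1))).card := by
  classical
  have heq : (Finset.univ.filter (fun z : Fin n × Fin m × Fin k =>
      2 * z.1.val ≠ s ∧
      (z.2.1.val = 0 ∨ z.2.1.val = m - 1 ∨ z.2.2.val = 0 ∨ z.2.2.val = k - 1))) =
      (Finset.univ.filter (fun a : Fin n => 2 * a.val ≠ s)) ×ˢ
      (Finset.univ.filter (fun z : Fin m × Fin k =>
        z.1.val = 0 ∨ z.1.val = m - 1 ∨ z.2.val = 0 ∨ z.2.val = k - 1)) := by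
    ext z
    simp only [Finset.mem_filter, Finset.mem_univ, true_and, Finset.mem_product]
  rw [heq, Finset.card_product]
  have h1 := cardA n s
  have h2 := cardB m k hm hk
  calc n * (m + k - 2) ≤ (n - 1) * (2 * (m + k) - 4) := by
        obtain ⟨a, rfl⟩ := Nat.exists_eq_add_of_le hn
        obtain ⟨b, hb⟩ := Nat.exists_eq_add_of_le hm
        have e1 : (2 + a) * (m + k - 2) ≤ (2 + a - 1) * (2 * (m + k) - 4) := by
          have : 2 * (m + k) - 4 = 2 * (m + k - 2) := by omega
          rw [this]
          have : (2 + a - 1) * (2 * (m + k - 2)) = ((2 + a - 1) * 2) * (m + k - 2) := by ring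
          rw [this]
          exact Nat.mul_le_mul_right _ (by omega)
        exact e1
    _ ≤ (Finset.univ.filter (fun a : Fin n => 2 * a.val ≠ s)).card *
        (Finset.univ.filter (fun z : Fin m × Fin k =>
          z.1.val = 0 ∨ z.1.val = m - 1 ∨ z.2.val = 0 ∨ z.2.val = k - 1)).card :=
        Nat.mul_le_mul h1 h2

/-- If two distinct grid vertices differ in exactly one coordinate, then at least
`α_M(n1,n2,n3)` boundary vertices resolve them. -/
theorem grid3D_resolving_count_one_diff (n1 n2 n3 : ℕ)
    (h1 : 2 ≤ n1) (h2 : 2 ≤ n2) (h3 : 2 ≤ n3)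
    (u v : GridV n1 n2 n3)
    (hdiff :
      (u.1 ≠ v.1 ∧ u.2.1 = v.2.1 ∧ u.2.2 = v.2.2) ∨
      (u.1 = v.1 ∧ u.2.1 ≠ v.2.1 ∧ u.2.2 = v.2.2) ∨
      (u.1 = v.1 ∧ u.2.1 = v.2.1 ∧ u.2.2 ≠ v.2.2)) :
    alphaM n1 n2 n3 ≤
      ((gridBoundary n1 n2 n3).filter (fun w => gridResolves w u v)).card := by
  classical
  rcases hdiff with ⟨hne, hb, hc⟩ | ⟨ha, hne, hc⟩ | ⟨ha, hb, hne⟩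
  · -- differ in coordinate 1
    have hval : u.1.val ≠ v.1.val := fun h => hne (Fin.ext h)
    have key := main_count n1 n2 n3 h1 h2 h3 (u.1.val + v.1.val)
    have halpha : alphaM n1 n2 n3 ≤ n1 * (n2 + n3 - 2) := min_le_left _ _
    refine halpha.trans (key.trans (Finset.card_le_card ?_))
    intro z hz
    simp only [Finset.mem_filter, Finset.mem_univ, true_and] at hz ⊢
    refine ⟨by simp only [gridBoundary, Finset.mem_filter, Finset.mem_univ, true_and]; tauto, ?_⟩
    simp only [gridResolves, gridDist, hb, hc, ne_eq]
    intro heq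
    omega
  · -- differ in coordinate 2
    have hval : u.2.1.val ≠ v.2.1.val := fun h => hne (Fin.ext h)
    have key := main_count n2 n1 n3 h2 h1 h3 (u.2.1.val + v.2.1.val)
    have halpha : alphaM n1 n2 n3 ≤ n2 * (n1 + n3 - 2) :=
      le_trans (min_le_right _ _) (min_le_left _ _)
    refine halpha.trans (key.trans ?_)
    apply Finset.card_le_card_of_injOn (fun z => (z.2.1, z.1, z.2.2))
    · intro z hz
      simp only [Finset.mem_coe, Finset.mem_filter, Finset.mem_univ, true_and] at hz ⊢
      refine ⟨by simp only [gridBoundary, Finset.mem_filter, Finset.mem_univ, true_and]; tauto, ?_⟩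
      simp only [gridResolves, gridDist, ha, hc, ne_eq]
      intro heq
      omega
    · intro z _ w _ h
      simp only [Prod.mk.injEq] at h
      exact Prod.ext h.2.1 (Prod.ext h.1 h.2.2)
  · -- differ in coordinate 3
    have hval : u.2.2.val ≠ v.2.2.val := fun h => hne (Fin.ext h)
    have key := main_count n3 n1 n2 h3 h1 h2 (u.2.2.val + v.2.2.val)
    have halpha : alphaM n1 n2 n3 ≤ n3 * (n1 + n2 - 2) :=
      le_trans (min_le_right _ _) (min_le_right _ _)
    refine halpha.trans (key.trans ?_)
    apply Finset.card_le_card_of_injOn (fun z => (z.2.1, z.2.2, z.1))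
    · intro z hz
      simp only [Finset.mem_coe, Finset.mem_filter, Finset.mem_univ, true_and] at hz ⊢
      refine ⟨by simp only [gridBoundary, Finset.mem_filter, Finset.mem_univ, true_and]; tauto, ?_⟩
      simp only [gridResolves, gridDist, ha, hb, ne_eq]
      intro heq
      omega
    · intro z _ w _ h
      simp only [Prod.mk.injEq] at h
      exact Prod.ext h.2.2 (Prod.ext h.1 h.2.1)
end

section
/- Let n1, n2, n3 ≥ 2 and let u = (x1,x2,x3) and v = (y1,y2,y3) be distinct vertices of the 3D grid P_{n1}□P_{n2}□P_{n3} that agree in exactly one coordinate (i.e., xi = yi for exactly one index i ∈ {1,2,3}). Then at least α_M(n1,n2,n3) vertices of F(n1,n2,n3) resolve u and v. -/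
section GridHelpers
open Finset

/-- Count of `b : Fin n` with `|b-x| = |b-x'| + k`. -/
def cntR (n : ℕ) (x x' : Fin n) (k : ℤ) : ℕ :=
  ((Finset.univ : Finset (Fin n)).filter (fun (b : Fin n) =>
    (((b:ℤ) - (x:ℤ)).natAbs : ℤ) = (((b:ℤ) - (x':ℤ)).natAbs : ℤ) + k)).card

/-- Column version: `c` restricted to the interior `0 < c < m-1`. -/
def cntC (m : ℕ) (y y' : Fin m) (k : ℤ) : ℕ :=
  ((Finset.univ : Finset (Fin m)).filter (fun (c : Fin m) =>
    c.val ≠ 0 ∧ c.val ≠ m - 1 ∧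
    (((c:ℤ) - (y:ℤ)).natAbs : ℤ) = (((c:ℤ) - (y':ℤ)).natAbs : ℤ) + k)).card

lemma cntR_swap (n : ℕ) (x x' : Fin n) (k : ℤ) : cntR n x x' k = cntR n x' x (-k) := by
  unfold cntR
  congr 1
  apply Finset.filter_congr
  intro b _; constructor <;> intro h <;> omega

lemma cntC_swap (m : ℕ) (y y' : Fin m) (k : ℤ) : cntC m y y' k = cntC m y' y (-k) := by
  unfold cntC
  congr 1
  apply Finset.filter_congr
  intro b _
  constructor <;> rintro ⟨h1, h2, h3⟩ <;> exact ⟨h1, h2, by omega⟩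

lemma cntR_lt (n : ℕ) (x x' : Fin n) (k : ℤ) (hk : k.natAbs < ((x:ℤ) - (x':ℤ)).natAbs) :
    cntR n x x' k ≤ 1 := by
  apply Finset.card_le_one.2
  intro a ha b hb
  simp only [Finset.mem_coe, Finset.mem_filter, Finset.mem_univ, true_and] at ha hb
  apply Fin.ext
  omega

lemma cntR_gt (n : ℕ) (x x' : Fin n) (k : ℤ) (hk : ((x:ℤ) - (x':ℤ)).natAbs < k.natAbs) :
    cntR n x x' k = 0 := by
  unfold cntR
  rw [Finset.card_eq_zero, Finset.filter_eq_empty_iff]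
  intro b _
  omega

lemma cntC_lt (m : ℕ) (y y' : Fin m) (k : ℤ) (hk : k.natAbs < ((y:ℤ) - (y':ℤ)).natAbs) :
    cntC m y y' k ≤ 1 := by
  apply Finset.card_le_one.2
  intro a ha b hb
  simp only [Finset.mem_coe, Finset.mem_filter, Finset.mem_univ, true_and] at ha hb
  apply Fin.ext
  omega

lemma cntC_gt (m : ℕ) (y y' : Fin m) (k : ℤ) (hk : ((y:ℤ) - (y':ℤ)).natAbs < k.natAbs) :
    cntC m y y' k = 0 := by
  unfold cntC
  rw [Finset.card_eq_zero, Finset.filter_eq_empty_iff]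
  intro b _
  simp only [not_and]
  intro _ _
  omega

lemma cntR_hi (n : ℕ) (x x' : Fin n) (h : (x:ℤ) < (x':ℤ)) :
    cntR n x x' ((x':ℤ) - (x:ℤ)) ≤ n - x'.val := by
  have key : cntR n x x' ((x':ℤ) - (x:ℤ)) ≤ (Finset.Icc x'.val (n-1)).card := by
    apply Finset.card_le_card_of_injOn (fun b => b.val)
    · intro b hb
      simp only [Finset.mem_coe, Finset.mem_filter, Finset.mem_univ, true_and] at hb
      simp only [Finset.mem_coe, Finset.mem_Icc]
      have := b.isLt; omega
    · intro a _ b _ hab; exact Fin.ext hab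
  rw [Nat.card_Icc] at key
  have := x'.isLt; omega

lemma cntR_lo (n : ℕ) (x x' : Fin n) (h : (x:ℤ) < (x':ℤ)) :
    cntR n x x' ((x:ℤ) - (x':ℤ)) ≤ x.val + 1 := by
  have key : cntR n x x' ((x:ℤ) - (x':ℤ)) ≤ (Finset.range (x.val+1)).card := by
    apply Finset.card_le_card_of_injOn (fun b => b.val)
    · intro b hb
      simp only [Finset.mem_coe, Finset.mem_filter, Finset.mem_univ, true_and] at hb
      simp only [Finset.mem_coe, Finset.mem_range]
      omega
    · intro a _ b _ hab; exact Fin.ext hab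
  simpa using key

lemma cntC_hi (m : ℕ) (y y' : Fin m) (h : (y:ℤ) < (y':ℤ)) :
    cntC m y y' ((y':ℤ) - (y:ℤ)) ≤ m - 1 - y'.val := by
  have key : cntC m y y' ((y':ℤ) - (y:ℤ)) ≤ (Finset.Icc y'.val (m-2)).card := by
    apply Finset.card_le_card_of_injOn (fun b => b.val)
    · intro b hb
      simp only [Finset.mem_coe, Finset.mem_filter, Finset.mem_univ, true_and] at hb
      simp only [Finset.mem_coe, Finset.mem_Icc]
      have := b.isLt; have := y'.isLt
      obtain ⟨h1, h2, h3⟩ := hb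
      omega
    · intro a _ b _ hab; exact Fin.ext hab
  rw [Nat.card_Icc] at key
  have := y'.isLt; omega

lemma cntC_lo (m : ℕ) (y y' : Fin m) (h : (y:ℤ) < (y':ℤ)) :
    cntC m y y' ((y:ℤ) - (y':ℤ)) ≤ y.val := by
  have key : cntC m y y' ((y:ℤ) - (y':ℤ)) ≤ (Finset.Icc 1 y.val).card := by
    apply Finset.card_le_card_of_injOn (fun b => b.val)
    · intro b hb
      simp only [Finset.mem_coe, Finset.mem_filter, Finset.mem_univ, true_and] at hb
      simp only [Finset.mem_coe, Finset.mem_Icc]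
      obtain ⟨h1, h2, h3⟩ := hb
      have := b.isLt
      omega
    · intro a _ b _ hab; exact Fin.ext hab
  rw [Nat.card_Icc] at key
  omega

lemma cntR_pair (n : ℕ) (x x' : Fin n) (k : ℤ)
    (hD : k.natAbs = ((x:ℤ) - (x':ℤ)).natAbs) (h0 : k ≠ 0) :
    cntR n x x' k + cntR n x x' (-k) ≤ n + 1 - k.natAbs := by
  have hxx : (x:ℤ) ≠ (x':ℤ) := by omega
  have hxn := x.isLt; have hxn' := x'.isLt
  rcases lt_or_gt_of_ne hxx with h | h
  · have h1 := cntR_hi n x x' h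
    have h2 := cntR_lo n x x' h
    rcases (by omega : k = (x':ℤ) - (x:ℤ) ∨ k = (x:ℤ) - (x':ℤ)) with rfl | rfl
    · have : -((x':ℤ) - (x:ℤ)) = (x:ℤ) - (x':ℤ) := by ring
      rw [this]; omega
    · have : -((x:ℤ) - (x':ℤ)) = (x':ℤ) - (x:ℤ) := by ring
      rw [this]; omega
  · rw [cntR_swap n x x' k, cntR_swap n x x' (-k), neg_neg]
    have h1 := cntR_hi n x' x h
    have h2 := cntR_lo n x' x h
    rcases (by omega : -k = (x:ℤ) - (x':ℤ) ∨ -k = (x':ℤ) - (x:ℤ)) with hk | hk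
    · have hk2 : k = (x':ℤ) - (x:ℤ) := by omega
      rw [hk, hk2]
      omega
    · have hk2 : k = (x:ℤ) - (x':ℤ) := by omega
      rw [hk, hk2]
      omega

lemma cntC_pair (m : ℕ) (y y' : Fin m) (k : ℤ)
    (hD : k.natAbs = ((y:ℤ) - (y':ℤ)).natAbs) (h0 : k ≠ 0) :
    cntC m y y' k + cntC m y y' (-k) ≤ m - 1 - k.natAbs := by
  have hyy : (y:ℤ) ≠ (y':ℤ) := by omega
  have hyn := y.isLt; have hyn' := y'.isLt
  rcases lt_or_gt_of_ne hyy with h | h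
  · have h1 := cntC_hi m y y' h
    have h2 := cntC_lo m y y' h
    rcases (by omega : k = (y':ℤ) - (y:ℤ) ∨ k = (y:ℤ) - (y':ℤ)) with rfl | rfl
    · have : -((y':ℤ) - (y:ℤ)) = (y:ℤ) - (y':ℤ) := by ring
      rw [this]; omega
    · have : -((y:ℤ) - (y':ℤ)) = (y':ℤ) - (y:ℤ) := by ring
      rw [this]; omega
  · rw [cntC_swap m y y' k, cntC_swap m y y' (-k), neg_neg]
    have h1 := cntC_hi m y' y h
    have h2 := cntC_lo m y' y h
    rcases (by omega : -k = (y:ℤ) - (y':ℤ) ∨ -k = (y':ℤ) - (y:ℤ)) with hk | hk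
    · have hk2 : k = (y':ℤ) - (y:ℤ) := by omega
      rw [hk, hk2]
      omega
    · have hk2 : k = (y:ℤ) - (y':ℤ) := by omega
      rw [hk, hk2]
      omega

set_option maxHeartbeats 2000000 in
lemma nonres_le (n m : ℕ) (hn : 2 ≤ n) (hm : 2 ≤ m)
    (x x' : Fin n) (y y' : Fin m) (hx : x ≠ x') (hy : y ≠ y') :
    ((Finset.univ : Finset (Fin n × Fin m)).filter (fun z =>
      (z.1.val = 0 ∨ z.1.val = n-1 ∨ z.2.val = 0 ∨ z.2.val = m-1) ∧
      ((z.1:ℤ) - (x:ℤ)).natAbs + ((z.2:ℤ) - (y:ℤ)).natAbs =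
        ((z.1:ℤ) - (x':ℤ)).natAbs + ((z.2:ℤ) - (y':ℤ)).natAbs)).card ≤ n + m - 2 := by
  set k1 : ℤ := (x':ℤ) - (x:ℤ) with hk1
  set k2 : ℤ := (y':ℤ) - (y:ℤ) with hk2
  have hx1 : (x:ℤ) ≠ (x':ℤ) := fun h => hx (Fin.ext (by exact_mod_cast h))
  have hy1 : (y:ℤ) ≠ (y':ℤ) := fun h => hy (Fin.ext (by exact_mod_cast h))
  set P1 := (Finset.univ : Finset (Fin n × Fin m)).filter (fun z => z.2.val = 0 ∧
      ((z.1:ℤ) - (x:ℤ)).natAbs + ((z.2:ℤ) - (y:ℤ)).natAbs =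
        ((z.1:ℤ) - (x':ℤ)).natAbs + ((z.2:ℤ) - (y':ℤ)).natAbs) with hP1
  set P2 := (Finset.univ : Finset (Fin n × Fin m)).filter (fun z => z.2.val = m-1 ∧
      ((z.1:ℤ) - (x:ℤ)).natAbs + ((z.2:ℤ) - (y:ℤ)).natAbs =
        ((z.1:ℤ) - (x':ℤ)).natAbs + ((z.2:ℤ) - (y':ℤ)).natAbs) with hP2
  set P3 := (Finset.univ : Finset (Fin n × Fin m)).filter
      (fun z => z.2.val ≠ 0 ∧ z.2.val ≠ m-1 ∧ z.1.val = 0 ∧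
      ((z.1:ℤ) - (x:ℤ)).natAbs + ((z.2:ℤ) - (y:ℤ)).natAbs =
        ((z.1:ℤ) - (x':ℤ)).natAbs + ((z.2:ℤ) - (y':ℤ)).natAbs) with hP3
  set P4 := (Finset.univ : Finset (Fin n × Fin m)).filter
      (fun z => z.2.val ≠ 0 ∧ z.2.val ≠ m-1 ∧ z.1.val = n-1 ∧
      ((z.1:ℤ) - (x:ℤ)).natAbs + ((z.2:ℤ) - (y:ℤ)).natAbs =
        ((z.1:ℤ) - (x':ℤ)).natAbs + ((z.2:ℤ) - (y':ℤ)).natAbs) with hP4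
  have hsub : ((Finset.univ : Finset (Fin n × Fin m)).filter (fun z =>
      (z.1.val = 0 ∨ z.1.val = n-1 ∨ z.2.val = 0 ∨ z.2.val = m-1) ∧
      ((z.1:ℤ) - (x:ℤ)).natAbs + ((z.2:ℤ) - (y:ℤ)).natAbs =
        ((z.1:ℤ) - (x':ℤ)).natAbs + ((z.2:ℤ) - (y':ℤ)).natAbs))
      ⊆ P1 ∪ P2 ∪ P3 ∪ P4 := by
    intro z hz
    simp only [Finset.mem_filter, Finset.mem_univ, true_and] at hz
    simp only [hP1, hP2, hP3, hP4, Finset.mem_union, Finset.mem_filter, Finset.mem_univ, true_and]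
    tauto
  have hc : ((Finset.univ : Finset (Fin n × Fin m)).filter (fun z =>
      (z.1.val = 0 ∨ z.1.val = n-1 ∨ z.2.val = 0 ∨ z.2.val = m-1) ∧
      ((z.1:ℤ) - (x:ℤ)).natAbs + ((z.2:ℤ) - (y:ℤ)).natAbs =
        ((z.1:ℤ) - (x':ℤ)).natAbs + ((z.2:ℤ) - (y':ℤ)).natAbs)).card
      ≤ P1.card + P2.card + P3.card + P4.card := by
    refine le_trans (Finset.card_le_card hsub) ?_
    refine le_trans (Finset.card_union_le _ _) ?_
    refine Nat.add_le_add_right (le_trans (Finset.card_union_le _ _) ?_) _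
    exact Nat.add_le_add_right (Finset.card_union_le _ _) _
  have b1 : P1.card ≤ cntR n x x' k2 := by
    apply Finset.card_le_card_of_injOn (fun z => z.1)
    · intro z hz
      simp only [Finset.mem_coe, hP1, Finset.mem_filter, Finset.mem_univ, true_and] at hz
      simp only [Finset.mem_coe, cntR, Finset.mem_filter, Finset.mem_univ, true_and, hk2]
      have h20 : ((z.2:ℤ)) = 0 := by omega
      rw [h20] at hz
      have := y.isLt; have := y'.isLt
      omega
    · intro a ha b hb hab
      simp only [hP1, Finset.mem_coe, Finset.mem_filter, Finset.mem_univ, true_and] at ha hb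
      obtain ⟨ha2, -⟩ := ha; obtain ⟨hb2, -⟩ := hb
      have : a.2 = b.2 := Fin.ext (by omega)
      exact Prod.ext hab this
  have b2 : P2.card ≤ cntR n x x' (-k2) := by
    apply Finset.card_le_card_of_injOn (fun z => z.1)
    · intro z hz
      simp only [Finset.mem_coe, hP2, Finset.mem_filter, Finset.mem_univ, true_and] at hz
      simp only [Finset.mem_coe, cntR, Finset.mem_filter, Finset.mem_univ, true_and, hk2]
      have h2z := z.2.isLt
      have h2m : ((z.2:ℤ)) = (m:ℤ) - 1 := by omega
      rw [h2m] at hz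
      have := y.isLt; have := y'.isLt
      omega
    · intro a ha b hb hab
      simp only [hP2, Finset.mem_coe, Finset.mem_filter, Finset.mem_univ, true_and] at ha hb
      obtain ⟨ha2, -⟩ := ha; obtain ⟨hb2, -⟩ := hb
      have : a.2 = b.2 := Fin.ext (by omega)
      exact Prod.ext hab this
  have b3 : P3.card ≤ cntC m y y' k1 := by
    apply Finset.card_le_card_of_injOn (fun z => z.2)
    · intro z hz
      simp only [Finset.mem_coe, hP3, Finset.mem_filter, Finset.mem_univ, true_and] at hz
      simp only [Finset.mem_coe, cntC, Finset.mem_filter, Finset.mem_univ, true_and, hk1]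
      obtain ⟨hz1, hz2, hz3, hz4⟩ := hz
      have h10 : ((z.1:ℤ)) = 0 := by omega
      rw [h10] at hz4
      have := x.isLt; have := x'.isLt
      exact ⟨hz1, hz2, by omega⟩
    · intro a ha b hb hab
      simp only [hP3, Finset.mem_coe, Finset.mem_filter, Finset.mem_univ, true_and] at ha hb
      obtain ⟨-, -, ha1, -⟩ := ha; obtain ⟨-, -, hb1, -⟩ := hb
      have : a.1 = b.1 := Fin.ext (by omega)
      exact Prod.ext this hab
  have b4 : P4.card ≤ cntC m y y' (-k1) := by
    apply Finset.card_le_card_of_injOn (fun z => z.2)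
    · intro z hz
      simp only [Finset.mem_coe, hP4, Finset.mem_filter, Finset.mem_univ, true_and] at hz
      simp only [Finset.mem_coe, cntC, Finset.mem_filter, Finset.mem_univ, true_and, hk1]
      obtain ⟨hz1, hz2, hz3, hz4⟩ := hz
      have h1z := z.1.isLt
      have h1n : ((z.1:ℤ)) = (n:ℤ) - 1 := by omega
      rw [h1n] at hz4
      have := x.isLt; have := x'.isLt
      exact ⟨hz1, hz2, by omega⟩
    · intro a ha b hb hab
      simp only [hP4, Finset.mem_coe, Finset.mem_filter, Finset.mem_univ, true_and] at ha hb
      obtain ⟨-, -, ha1, -⟩ := ha; obtain ⟨-, -, hb1, -⟩ := hb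
      have : a.1 = b.1 := Fin.ext (by omega)
      exact Prod.ext this hab
  refine le_trans hc ?_
  have hk1ne : k1 ≠ 0 := by omega
  have hk2ne : k2 ≠ 0 := by omega
  have hxlt := x.isLt; have hxlt' := x'.isLt
  have hylt := y.isLt; have hylt' := y'.isLt
  rcases lt_trichotomy k1.natAbs k2.natAbs with hcmp | hcmp | hcmp
  · have c1 : cntR n x x' k2 = 0 := cntR_gt n x x' k2 (by omega)
    have c2 : cntR n x x' (-k2) = 0 := cntR_gt n x x' (-k2) (by omega)
    have c3 : cntC m y y' k1 ≤ 1 := cntC_lt m y y' k1 (by omega)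
    have c4 : cntC m y y' (-k1) ≤ 1 := cntC_lt m y y' (-k1) (by omega)
    omega
  · have c1 : cntR n x x' k2 + cntR n x x' (-k2) ≤ n + 1 - k2.natAbs :=
      cntR_pair n x x' k2 (by omega) hk2ne
    have c2 : cntC m y y' k1 + cntC m y y' (-k1) ≤ m - 1 - k1.natAbs :=
      cntC_pair m y y' k1 (by omega) hk1ne
    omega
  · have c1 : cntR n x x' k2 ≤ 1 := cntR_lt n x x' k2 (by omega)
    have c2 : cntR n x x' (-k2) ≤ 1 := cntR_lt n x x' (-k2) (by omega)
    have c3 : cntC m y y' k1 = 0 := cntC_gt m y y' k1 (by omega)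
    have c4 : cntC m y y' (-k1) = 0 := cntC_gt m y y' (-k1) (by omega)
    omega

lemma boundary2_card (n m : ℕ) (hn : 2 ≤ n) (hm : 2 ≤ m) :
    2*n + 2*m - 4 ≤ ((Finset.univ : Finset (Fin n × Fin m)).filter (fun z =>
      z.1.val = 0 ∨ z.1.val = n-1 ∨ z.2.val = 0 ∨ z.2.val = m-1)).card := by
  classical
  have htot := Finset.card_filter_add_card_filter_not
    (s := (Finset.univ : Finset (Fin n × Fin m)))
    (p := fun z => z.1.val = 0 ∨ z.1.val = n-1 ∨ z.2.val = 0 ∨ z.2.val = m-1)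
  have huniv : (Finset.univ : Finset (Fin n × Fin m)).card = n * m := by
    simp [Finset.card_univ]
  have hint : ((Finset.univ : Finset (Fin n × Fin m)).filter (fun z =>
      ¬(z.1.val = 0 ∨ z.1.val = n-1 ∨ z.2.val = 0 ∨ z.2.val = m-1))).card
      ≤ (n-2) * (m-2) := by
    have : ((Finset.univ : Finset (Fin n × Fin m)).filter (fun z =>
        ¬(z.1.val = 0 ∨ z.1.val = n-1 ∨ z.2.val = 0 ∨ z.2.val = m-1))).card
        ≤ ((Finset.range (n-2)) ×ˢ (Finset.range (m-2))).card := by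
      apply Finset.card_le_card_of_injOn (fun z => (z.1.val - 1, z.2.val - 1))
      · intro z hz
        simp only [Finset.mem_coe, Finset.mem_filter, Finset.mem_univ, true_and, not_or] at hz
        simp only [Finset.mem_coe, Finset.mem_product, Finset.mem_range]
        have := z.1.isLt; have := z.2.isLt
        omega
      · intro a ha b hb hab
        simp only [Finset.mem_coe, Finset.mem_filter, Finset.mem_univ, true_and, not_or] at ha hb
        simp only [Prod.mk.injEq] at hab
        have h1 : a.1 = b.1 := Fin.ext (by omega)
        have h2 : a.2 = b.2 := Fin.ext (by omega)
        exact Prod.ext h1 h2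
    simpa using this
  obtain ⟨a, rfl⟩ : ∃ a, n = a + 2 := ⟨n - 2, by omega⟩
  obtain ⟨b, rfl⟩ : ∃ b, m = b + 2 := ⟨m - 2, by omega⟩
  have hexp : (a+2) * (b+2) = a*b + 2*a + 2*b + 4 := by ring
  simp only [Nat.add_sub_cancel] at hint
  omega

lemma res2_ge (n m : ℕ) (hn : 2 ≤ n) (hm : 2 ≤ m)
    (x x' : Fin n) (y y' : Fin m) (hx : x ≠ x') (hy : y ≠ y') :
    n + m - 2 ≤ ((Finset.univ : Finset (Fin n × Fin m)).filter (fun z =>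
      (z.1.val = 0 ∨ z.1.val = n-1 ∨ z.2.val = 0 ∨ z.2.val = m-1) ∧
      ((z.1:ℤ) - (x:ℤ)).natAbs + ((z.2:ℤ) - (y:ℤ)).natAbs ≠
        ((z.1:ℤ) - (x':ℤ)).natAbs + ((z.2:ℤ) - (y':ℤ)).natAbs)).card := by
  classical
  set B := (Finset.univ : Finset (Fin n × Fin m)).filter (fun z =>
      z.1.val = 0 ∨ z.1.val = n-1 ∨ z.2.val = 0 ∨ z.2.val = m-1) with hB
  have htot := Finset.card_filter_add_card_filter_not
    (s := B)
    (p := fun z => ((z.1:ℤ) - (x:ℤ)).natAbs + ((z.2:ℤ) - (y:ℤ)).natAbs =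
        ((z.1:ℤ) - (x':ℤ)).natAbs + ((z.2:ℤ) - (y':ℤ)).natAbs)
  have e1 : (B.filter (fun z => ((z.1:ℤ) - (x:ℤ)).natAbs + ((z.2:ℤ) - (y:ℤ)).natAbs =
        ((z.1:ℤ) - (x':ℤ)).natAbs + ((z.2:ℤ) - (y':ℤ)).natAbs))
      = ((Finset.univ : Finset (Fin n × Fin m)).filter (fun z =>
      (z.1.val = 0 ∨ z.1.val = n-1 ∨ z.2.val = 0 ∨ z.2.val = m-1) ∧
      ((z.1:ℤ) - (x:ℤ)).natAbs + ((z.2:ℤ) - (y:ℤ)).natAbs =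
        ((z.1:ℤ) - (x':ℤ)).natAbs + ((z.2:ℤ) - (y':ℤ)).natAbs)) := by
    rw [hB, Finset.filter_filter]
  have e2 : (B.filter (fun z => ¬(((z.1:ℤ) - (x:ℤ)).natAbs + ((z.2:ℤ) - (y:ℤ)).natAbs =
        ((z.1:ℤ) - (x':ℤ)).natAbs + ((z.2:ℤ) - (y':ℤ)).natAbs)))
      = ((Finset.univ : Finset (Fin n × Fin m)).filter (fun z =>
      (z.1.val = 0 ∨ z.1.val = n-1 ∨ z.2.val = 0 ∨ z.2.val = m-1) ∧
      ((z.1:ℤ) - (x:ℤ)).natAbs + ((z.2:ℤ) - (y:ℤ)).natAbs ≠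
        ((z.1:ℤ) - (x':ℤ)).natAbs + ((z.2:ℤ) - (y':ℤ)).natAbs)) := by
    rw [hB, Finset.filter_filter]
  rw [e1, e2] at htot
  have h1 := nonres_le n m hn hm x x' y y' hx hy
  have h2 := boundary2_card n m hn hm
  rw [← hB] at h2
  omega

end GridHelpers

/-- If two distinct grid vertices agree in exactly one coordinate, then at least
`α_M(n1,n2,n3)` boundary vertices resolve them. -/
theorem grid3D_resolving_count_one_equal (n1 n2 n3 : ℕ)
    (h1 : 2 ≤ n1) (h2 : 2 ≤ n2) (h3 : 2 ≤ n3)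
    (u v : GridV n1 n2 n3)
    (heq :
      (u.1 = v.1 ∧ u.2.1 ≠ v.2.1 ∧ u.2.2 ≠ v.2.2) ∨
      (u.1 ≠ v.1 ∧ u.2.1 = v.2.1 ∧ u.2.2 ≠ v.2.2) ∨
      (u.1 ≠ v.1 ∧ u.2.1 ≠ v.2.1 ∧ u.2.2 = v.2.2)) :
    alphaM n1 n2 n3 ≤
      ((gridBoundary n1 n2 n3).filter (fun w => gridResolves w u v)).card := by
  classical
  rcases heq with ⟨he, hd1, hd2⟩ | ⟨hd1, he, hd2⟩ | ⟨hd1, hd2, he⟩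
  · -- first coordinate equal
    set R2 := ((Finset.univ : Finset (Fin n2 × Fin n3)).filter (fun z =>
      (z.1.val = 0 ∨ z.1.val = n2-1 ∨ z.2.val = 0 ∨ z.2.val = n3-1) ∧
      ((z.1:ℤ) - (u.2.1:ℤ)).natAbs + ((z.2:ℤ) - (u.2.2:ℤ)).natAbs ≠
        ((z.1:ℤ) - (v.2.1:ℤ)).natAbs + ((z.2:ℤ) - (v.2.2:ℤ)).natAbs)) with hR2
    have hr := res2_ge n2 n3 h2 h3 u.2.1 v.2.1 u.2.2 v.2.2 hd1 hd2
    rw [← hR2] at hr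
    have hinj : ((Finset.univ : Finset (Fin n1)) ×ˢ R2).card ≤
        ((gridBoundary n1 n2 n3).filter (fun w => gridResolves w u v)).card := by
      apply Finset.card_le_card
      intro w hw
      simp only [Finset.mem_product, Finset.mem_univ, true_and, hR2, Finset.mem_filter] at hw
      obtain ⟨hbd, hres⟩ := hw
      simp only [Finset.mem_filter, gridBoundary, Finset.mem_univ, true_and]
      refine ⟨by tauto, ?_⟩
      simp only [gridResolves, gridDist, he]
      omega
    calc alphaM n1 n2 n3 ≤ n1 * (n2 + n3 - 2) := min_le_left _ _
      _ ≤ n1 * R2.card := Nat.mul_le_mul_left _ hr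
      _ = ((Finset.univ : Finset (Fin n1)) ×ˢ R2).card := by
          simp [Finset.card_product]
      _ ≤ _ := hinj
  · -- second coordinate equal
    set R2 := ((Finset.univ : Finset (Fin n1 × Fin n3)).filter (fun z =>
      (z.1.val = 0 ∨ z.1.val = n1-1 ∨ z.2.val = 0 ∨ z.2.val = n3-1) ∧
      ((z.1:ℤ) - (u.1:ℤ)).natAbs + ((z.2:ℤ) - (u.2.2:ℤ)).natAbs ≠
        ((z.1:ℤ) - (v.1:ℤ)).natAbs + ((z.2:ℤ) - (v.2.2:ℤ)).natAbs)) with hR2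
    have hr := res2_ge n1 n3 h1 h3 u.1 v.1 u.2.2 v.2.2 hd1 hd2
    rw [← hR2] at hr
    have hinj : (R2 ×ˢ (Finset.univ : Finset (Fin n2))).card ≤
        ((gridBoundary n1 n2 n3).filter (fun w => gridResolves w u v)).card := by
      apply Finset.card_le_card_of_injOn (fun p => (p.1.1, p.2, p.1.2))
      · intro p hp
        simp only [Finset.mem_coe, Finset.mem_product, Finset.mem_univ, and_true, hR2, Finset.mem_filter] at hp
        obtain ⟨hbd, hres⟩ := hp
        simp only [Finset.mem_coe, Finset.mem_filter, gridBoundary, Finset.mem_univ, true_and]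
        refine ⟨by tauto, ?_⟩
        simp only [gridResolves, gridDist, he]
        omega
      · intro a _ b _ hab
        simp only [Prod.mk.injEq] at hab
        obtain ⟨e1, e2, e3⟩ := hab
        exact Prod.ext (Prod.ext e1 e3) e2
    calc alphaM n1 n2 n3 ≤ n2 * (n1 + n3 - 2) :=
        le_trans (min_le_right _ _) (min_le_left _ _)
      _ ≤ n2 * R2.card := Nat.mul_le_mul_left _ hr
      _ = (R2 ×ˢ (Finset.univ : Finset (Fin n2))).card := by
          simp [Finset.card_product, Nat.mul_comm]
      _ ≤ _ := hinj
  · -- third coordinate equal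
    set R2 := ((Finset.univ : Finset (Fin n1 × Fin n2)).filter (fun z =>
      (z.1.val = 0 ∨ z.1.val = n1-1 ∨ z.2.val = 0 ∨ z.2.val = n2-1) ∧
      ((z.1:ℤ) - (u.1:ℤ)).natAbs + ((z.2:ℤ) - (u.2.1:ℤ)).natAbs ≠
        ((z.1:ℤ) - (v.1:ℤ)).natAbs + ((z.2:ℤ) - (v.2.1:ℤ)).natAbs)) with hR2
    have hr := res2_ge n1 n2 h1 h2 u.1 v.1 u.2.1 v.2.1 hd1 hd2
    rw [← hR2] at hr
    have hinj : (R2 ×ˢ (Finset.univ : Finset (Fin n3))).card ≤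
        ((gridBoundary n1 n2 n3).filter (fun w => gridResolves w u v)).card := by
      apply Finset.card_le_card_of_injOn (fun p => (p.1.1, p.1.2, p.2))
      · intro p hp
        simp only [Finset.mem_coe, Finset.mem_product, Finset.mem_univ, and_true, hR2, Finset.mem_filter] at hp
        obtain ⟨hbd, hres⟩ := hp
        simp only [Finset.mem_coe, Finset.mem_filter, gridBoundary, Finset.mem_univ, true_and]
        refine ⟨by tauto, ?_⟩
        simp only [gridResolves, gridDist, he]
        omega
      · intro a _ b _ hab
        simp only [Prod.mk.injEq] at hab
        obtain ⟨e1, e2, e3⟩ := hab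
        exact Prod.ext (Prod.ext e1 e2) e3
    calc alphaM n1 n2 n3 ≤ n3 * (n1 + n2 - 2) :=
        le_trans (min_le_right _ _) (min_le_right _ _)
      _ ≤ n3 * R2.card := Nat.mul_le_mul_left _ hr
      _ = (R2 ×ˢ (Finset.univ : Finset (Fin n3))).card := by
          simp [Finset.card_product, Nat.mul_comm]
      _ ≤ _ := hinj
end

section
/- Let n1, n2, n3 ≥ 2 and let u = (x1,x2,0) and v = (y1,y2,n3−1) be two vertices of the 3D grid P_{n1}□P_{n2}□P_{n3}. Then at least n3(n1+n2−2) vertices of F(n1,n2,n3) resolve u and v. -/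
/-!
Fix the first two coordinates of a vertex `w` and let its third coordinate `t` vary. Since `u`
lies in the bottom layer and `v` in the top layer, `d(w,u) - d(w,v)` equals a constant plus
`t - (n3 - 1 - t)`, which is strictly increasing in `t`; so each of the `n1 n2` vertical lines
contains at most one vertex that does not resolve `u` and `v`. The boundary has
`n1 n2 n3 - (n1-2)(n2-2)(n3-2)` vertices, and removing `n1 n2` of them still leaves at least
`n3 (n1 + n2 - 2)`.
-/

open Finset

def finInterior (n : ℕ) : Finset (Fin n) :=
  univ.filter fun i => i.val ≠ 0 ∧ i.val ≠ n - 1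

lemma card_finInterior (n : ℕ) : (finInterior n).card = n - 2 := by
  rcases Nat.lt_or_ge n 2 with hn | hn
  · interval_cases n <;> decide
  have hends : (univ.filter fun i : Fin n => ¬(i.val ≠ 0 ∧ i.val ≠ n - 1))
      = {⟨0, by omega⟩, ⟨n - 1, by omega⟩} := by
    ext i
    simp only [mem_filter, mem_univ, true_and, mem_insert, mem_singleton, Fin.ext_iff]
    tauto
  have hsplit := card_filter_add_card_filter_not (s := (univ : Finset (Fin n)))
    (fun i : Fin n => i.val ≠ 0 ∧ i.val ≠ n - 1)
  rw [hends, card_pair (by simp [Fin.ext_iff]; omega), card_univ, Fintype.card_fin] at hsplit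
  rw [finInterior]
  omega

lemma compl_gridBoundary (n1 n2 n3 : ℕ) :
    (gridBoundary n1 n2 n3)ᶜ = finInterior n1 ×ˢ finInterior n2 ×ˢ finInterior n3 := by
  ext ⟨a, b, c⟩
  simp only [gridBoundary, finInterior, mem_compl, mem_filter, mem_univ, true_and, mem_product]
  tauto

lemma card_gridBoundary (n1 n2 n3 : ℕ) :
    (gridBoundary n1 n2 n3).card = n1 * (n2 * n3) - (n1 - 2) * ((n2 - 2) * (n3 - 2)) := by
  have h := card_compl (gridBoundary n1 n2 n3)
  rw [compl_gridBoundary, card_product, card_product, card_finInterior, card_finInterior,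
    card_finInterior] at h
  simp only [Fintype.card_prod, Fintype.card_fin] at h
  have := card_le_univ (gridBoundary n1 n2 n3)
  simp only [Fintype.card_prod, Fintype.card_fin] at this
  omega

section OppositeLayers

variable {n1 n2 n3 : ℕ} {u v : GridV n1 n2 n3}

lemma eq_of_not_gridResolves (hu : u.2.2.val = 0) (hv : v.2.2.val = n3 - 1)
    {w w' : GridV n1 n2 n3} (h1 : w.1 = w'.1) (h2 : w.2.1 = w'.2.1)
    (hw : ¬ gridResolves w u v) (hw' : ¬ gridResolves w' u v) : w = w' := by
  simp only [gridResolves, not_not, gridDist, h1, h2] at hw hw'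
  have h3 : w.2.2 = w'.2.2 := Fin.ext (by omega)
  exact Prod.ext h1 (Prod.ext h2 h3)

lemma card_filter_not_gridResolves_le (hu : u.2.2.val = 0) (hv : v.2.2.val = n3 - 1)
    (S : Finset (GridV n1 n2 n3)) :
    (S.filter fun w => ¬ gridResolves w u v).card ≤ n1 * n2 := by
  calc (S.filter fun w => ¬ gridResolves w u v).card
      ≤ (univ : Finset (Fin n1 × Fin n2)).card :=
        card_le_card_of_injOn (fun w => (w.1, w.2.1)) (fun _ _ => mem_univ _)
          fun w hw w' hw' hww' =>
            eq_of_not_gridResolves hu hv (Prod.mk.inj hww').1 (Prod.mk.inj hww').2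
              (mem_filter.1 hw).2 (mem_filter.1 hw').2
    _ = n1 * n2 := by simp

end OppositeLayers

/-- If `u = (x1,x2,0)` and `v = (y1,y2,n3-1)`, then at least `n3*(n1+n2-2)` boundary
vertices resolve `u` and `v`. -/
theorem grid3D_resolving_count_opposite_layers (n1 n2 n3 : ℕ)
    (h1 : 2 ≤ n1) (h2 : 2 ≤ n2) (h3 : 2 ≤ n3)
    (u v : GridV n1 n2 n3)
    (hu : u.2.2.val = 0) (hv : v.2.2.val = n3 - 1) :
    n3 * (n1 + n2 - 2) ≤
      ((gridBoundary n1 n2 n3).filter (fun w => gridResolves w u v)).card := by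
  have hsplit := card_filter_add_card_filter_not (s := gridBoundary n1 n2 n3)
    (fun w => gridResolves w u v)
  have hbad := card_filter_not_gridResolves_le hu hv (gridBoundary n1 n2 n3)
  rw [card_gridBoundary] at hsplit
  obtain ⟨a, rfl⟩ : ∃ a, n1 = a + 2 := ⟨n1 - 2, by omega⟩
  obtain ⟨b, rfl⟩ : ∃ b, n2 = b + 2 := ⟨n2 - 2, by omega⟩
  obtain ⟨c, rfl⟩ : ∃ c, n3 = c + 2 := ⟨n3 - 2, by omega⟩
  simp only [Nat.add_sub_cancel, show a + 2 + (b + 2) - 2 = a + b + 2 by omega] at hsplit ⊢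
  have hcount : (c + 2) * (a + b + 2) + (a + 2) * (b + 2) + a * (b * c)
      ≤ (a + 2) * ((b + 2) * (c + 2)) := by nlinarith
  omega
end

section
/- Let n1, n2, n3 ≥ 2 and let u = (x1,x2,x3) and v = (y1,y2,y3) be vertices of the 3D grid P_{n1}□P_{n2}□P_{n3} with xi ≠ yi for every i ∈ {1,2,3}. Then there are at least n1+n2−2 vertices (z1,z2,z3) with z3 = n3−1 and with z1 ∈ {0, n1−1} or z2 ∈ {0, n2−1}, each of which resolves u and v. -/
/-- Signed difference of distances (restricted to the top layer). -/
def Fz (x1 y1 x2 y2 x3 y3 a b : ℤ) : ℤ :=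
  ((a - x1).natAbs : ℤ) - ((a - y1).natAbs : ℤ) +
    (((b - x2).natAbs : ℤ) - ((b - y2).natAbs : ℤ)) + (y3 - x3)

/-- The chosen witness vertices. -/
def pick (n1 n2 n3 : ℕ) (h1 : 2 ≤ n1) (h2 : 2 ≤ n2) (h3 : 2 ≤ n3)
    (x1 y1 x2 y2 x3 y3 : ℤ) (i : ℕ) : GridV n1 n2 n3 :=
  if hi : i < n2 then
    (⟨if Fz x1 y1 x2 y2 x3 y3 0 i = 0 then n1 - 1 else 0, by split <;> omega⟩,
     ⟨i, hi⟩, ⟨n3 - 1, by omega⟩)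
  else
    (⟨min (i - n2 + 1) (n1 - 1), by omega⟩,
     ⟨if Fz x1 y1 x2 y2 x3 y3 ((i - n2 + 1 : ℕ) : ℤ) 0 = 0 then n2 - 1 else 0,
       by split <;> omega⟩,
     ⟨n3 - 1, by omega⟩)

lemma resolves_top {n1 n2 n3 : ℕ} (h3 : 2 ≤ n3) (u v z : GridV n1 n2 n3)
    (hz : z.2.2.val = n3 - 1)
    (hF : Fz (u.1 : ℤ) (v.1 : ℤ) (u.2.1 : ℤ) (v.2.1 : ℤ) (u.2.2 : ℤ) (v.2.2 : ℤ)
      (z.1 : ℤ) (z.2.1 : ℤ) ≠ 0) :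
    gridResolves z u v := by
  intro h
  apply hF
  simp only [gridDist, Fz] at *
  have hu3 := u.2.2.isLt
  have hv3 := v.2.2.isLt
  omega


/-- If `u` and `v` differ in all three coordinates, then at least `n1+n2-2` vertices
`(z1,z2,z3)` with `z3 = n3-1` and `z1` in `{0,n1-1}` or `z2` in `{0,n2-1}`
resolve them. -/
theorem grid3D_resolving_count_top_layer (n1 n2 n3 : ℕ)
    (h1 : 2 ≤ n1) (h2 : 2 ≤ n2) (h3 : 2 ≤ n3)
    (u v : GridV n1 n2 n3)
    (hd1 : u.1 ≠ v.1) (hd2 : u.2.1 ≠ v.2.1) (hd3 : u.2.2 ≠ v.2.2) :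
    n1 + n2 - 2 ≤
      ((Finset.univ : Finset (GridV n1 n2 n3)).filter (fun z =>
        z.2.2.val = n3 - 1 ∧
        (z.1.val = 0 ∨ z.1.val = n1 - 1 ∨ z.2.1.val = 0 ∨ z.2.1.val = n2 - 1) ∧
        gridResolves z u v)).card := by
  classical
  have hb1 : u.1.val < n1 := u.1.isLt
  have hb1' : v.1.val < n1 := v.1.isLt
  have hb2 : u.2.1.val < n2 := u.2.1.isLt
  have hb2' : v.2.1.val < n2 := v.2.1.isLt
  have hne1 : u.1.val ≠ v.1.val := fun h => hd1 (Fin.val_injective h)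
  have hne2 : u.2.1.val ≠ v.2.1.val := fun h => hd2 (Fin.val_injective h)
  rw [← Finset.card_range (n1 + n2 - 2)]
  apply Finset.card_le_card_of_injOn
    (pick n1 n2 n3 h1 h2 h3 (u.1 : ℤ) (v.1 : ℤ) (u.2.1 : ℤ) (v.2.1 : ℤ)
      (u.2.2 : ℤ) (v.2.2 : ℤ))
  · intro i hi
    rw [Finset.mem_coe, Finset.mem_range] at hi
    rw [Finset.mem_coe, Finset.mem_filter]
    refine ⟨Finset.mem_univ _, ?_⟩
    by_cases hi2 : i < n2
    · rw [pick, dif_pos hi2]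
      refine ⟨rfl, ?_, ?_⟩
      · dsimp only
        split <;> omega
      · apply resolves_top h3 u v _ rfl
        dsimp only
        split
        · rename_i hF0
          simp only [Fz] at hF0 ⊢
          omega
        · rename_i hF0
          simp only [Fz] at hF0 ⊢
          omega
    · rw [pick, dif_neg hi2]
      refine ⟨rfl, ?_, ?_⟩
      · dsimp only
        split <;> omega
      · apply resolves_top h3 u v _ rfl
        dsimp only
        have hmin : min (i - n2 + 1) (n1 - 1) = i - n2 + 1 := by omega
        rw [hmin]
        split
        · rename_i hF0
          simp only [Fz] at hF0 ⊢
          omega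
        · rename_i hF0
          simp only [Fz] at hF0 ⊢
          omega
  · intro i hi j hj hij
    rw [Finset.coe_range, Set.mem_Iio] at hi hj
    by_cases hi2 : i < n2 <;> by_cases hj2 : j < n2
    · rw [pick, pick, dif_pos hi2, dif_pos hj2] at hij
      have e2 := congrArg (fun z : GridV n1 n2 n3 => z.2.1.val) hij
      simpa using e2
    · rw [pick, pick, dif_pos hi2, dif_neg hj2] at hij
      have e1 := congrArg (fun z : GridV n1 n2 n3 => z.1.val) hij
      dsimp only at e1
      split at e1 <;> omega
    · rw [pick, pick, dif_neg hi2, dif_pos hj2] at hij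
      have e1 := congrArg (fun z : GridV n1 n2 n3 => z.1.val) hij
      dsimp only at e1
      split at e1 <;> omega
    · rw [pick, pick, dif_neg hi2, dif_neg hj2] at hij
      have e1 := congrArg (fun z : GridV n1 n2 n3 => z.1.val) hij
      dsimp only at e1
      omega
end

section
/- Let n1, n2, n3 ≥ 2 and let k be an integer with k ≥ α_M(n1,n2,n3). Then the 3D grid P_{n1}□P_{n2}□P_{n3} has no (k+1)-resolving set. -/
section Aux

lemma fin_filter_zero (m : ℕ) (hm : 1 ≤ m) :
    (Finset.univ.filter (fun b : Fin m => b.val = 0)).card = 1 := by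
  have h : (Finset.univ.filter (fun b : Fin m => b.val = 0)) = {⟨0, hm⟩} := by
    ext b
    simp [Fin.ext_iff]
  rw [h, Finset.card_singleton]

lemma fin_filter_ne_zero (m : ℕ) (hm : 1 ≤ m) :
    (Finset.univ.filter (fun b : Fin m => ¬ b.val = 0)).card = m - 1 := by
  have h := Finset.card_filter_add_card_filter_not
    (s := (Finset.univ : Finset (Fin m))) (p := fun b : Fin m => b.val = 0)
  rw [fin_filter_zero m hm] at h
  simp at h
  omega

lemma fin_sum_indicator (m : ℕ) (hm : 1 ≤ m) (c : Prop) [Decidable c] :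
    (∑ b : Fin m, if ¬(c ↔ b.val = 0) then 1 else 0) = if c then m - 1 else 1 := by
  by_cases hc : c
  · simp only [hc, true_iff, if_true]
    rw [← Finset.card_filter]
    exact fin_filter_ne_zero m hm
  · simp only [hc, false_iff, not_not, if_false]
    rw [← Finset.card_filter]
    exact fin_filter_zero m hm

lemma fin_sum_ite_zero (n : ℕ) (hn : 1 ≤ n) (a b : ℕ) :
    (∑ x : Fin n, if x.val = 0 then a else b) = a + (n - 1) * b := by
  rw [Finset.sum_ite, Finset.sum_const, Finset.sum_const,
    fin_filter_zero n hn, fin_filter_ne_zero n hn]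
  simp [Nat.mul_comm]

lemma countA (n1 n2 n3 : ℕ) (h2 : 1 ≤ n2) (h3 : 1 ≤ n3) :
    (Finset.univ.filter (fun w : GridV n1 n2 n3 =>
      ¬(w.2.1.val = 0 ↔ w.2.2.val = 0))).card = n1 * (n2 + n3 - 2) := by
  rw [Finset.card_filter, Fintype.sum_prod_type]
  have inner : ∀ a : Fin n1,
      (∑ y : Fin n2 × Fin n3, if ¬(y.1.val = 0 ↔ y.2.val = 0) then 1 else 0)
        = n2 + n3 - 2 := by
    intro a
    rw [Fintype.sum_prod_type]
    have h : ∀ x : Fin n2,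
        (∑ b : Fin n3, if ¬(x.val = 0 ↔ b.val = 0) then 1 else 0)
          = if x.val = 0 then n3 - 1 else 1 := fun x => fin_sum_indicator n3 h3 _
    rw [Finset.sum_congr rfl (fun x _ => h x), fin_sum_ite_zero n2 h2]
    omega
  rw [Finset.sum_congr rfl (fun a _ => inner a), Finset.sum_const]
  simp [Nat.mul_comm]

lemma countB (n1 n2 n3 : ℕ) (h1 : 1 ≤ n1) (h3 : 1 ≤ n3) :
    (Finset.univ.filter (fun w : GridV n1 n2 n3 =>
      ¬(w.1.val = 0 ↔ w.2.2.val = 0))).card = n2 * (n1 + n3 - 2) := by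
  rw [Finset.card_filter, Fintype.sum_prod_type]
  have inner : ∀ a : Fin n1,
      (∑ y : Fin n2 × Fin n3, if ¬(a.val = 0 ↔ y.2.val = 0) then 1 else 0)
        = n2 * (if a.val = 0 then n3 - 1 else 1) := by
    intro a
    rw [Fintype.sum_prod_type]
    have h : ∀ x : Fin n2,
        (∑ b : Fin n3, if ¬(a.val = 0 ↔ b.val = 0) then 1 else 0)
          = if a.val = 0 then n3 - 1 else 1 := fun x => fin_sum_indicator n3 h3 _
    rw [Finset.sum_congr rfl (fun x _ => h x), Finset.sum_const]
    simp [Nat.mul_comm]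
  rw [Finset.sum_congr rfl (fun a _ => inner a)]
  have h : ∀ a : Fin n1, (n2 * if a.val = 0 then n3 - 1 else 1)
      = (if a.val = 0 then n2 * (n3 - 1) else n2) := by
    intro a; split <;> simp
  rw [Finset.sum_congr rfl (fun a _ => h a), fin_sum_ite_zero n1 h1]
  have hh : n3 - 1 + (n1 - 1) = n1 + n3 - 2 := by omega
  calc n2 * (n3 - 1) + (n1 - 1) * n2
      = n2 * ((n3 - 1) + (n1 - 1)) := by ring
    _ = n2 * (n1 + n3 - 2) := by rw [hh]

lemma countC (n1 n2 n3 : ℕ) (h1 : 1 ≤ n1) (h2 : 1 ≤ n2) :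
    (Finset.univ.filter (fun w : GridV n1 n2 n3 =>
      ¬(w.1.val = 0 ↔ w.2.1.val = 0))).card = n3 * (n1 + n2 - 2) := by
  rw [Finset.card_filter, Fintype.sum_prod_type]
  have inner : ∀ a : Fin n1,
      (∑ y : Fin n2 × Fin n3, if ¬(a.val = 0 ↔ y.1.val = 0) then 1 else 0)
        = (if a.val = 0 then n2 - 1 else 1) * n3 := by
    intro a
    rw [Fintype.sum_prod_type]
    have h : ∀ x : Fin n2,
        (∑ b : Fin n3, if ¬(a.val = 0 ↔ x.val = 0) then 1 else 0)
          = (if ¬(a.val = 0 ↔ x.val = 0) then 1 else 0) * n3 := by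
      intro x
      rw [Finset.sum_const]
      simp [Nat.mul_comm]
    rw [Finset.sum_congr rfl (fun x _ => h x), ← Finset.sum_mul]
    rw [fin_sum_indicator n2 h2]
  rw [Finset.sum_congr rfl (fun a _ => inner a)]
  have h : ∀ a : Fin n1, (if a.val = 0 then n2 - 1 else 1) * n3
      = (if a.val = 0 then (n2 - 1) * n3 else n3) := by
    intro a; split <;> simp
  rw [Finset.sum_congr rfl (fun a _ => h a), fin_sum_ite_zero n1 h1]
  have hh : n2 - 1 + (n1 - 1) = n1 + n2 - 2 := by omega
  calc (n2 - 1) * n3 + (n1 - 1) * n3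
      = n3 * ((n2 - 1) + (n1 - 1)) := by ring
    _ = n3 * (n1 + n2 - 2) := by rw [hh]

/-- Generic step: if some pair of distinct vertices has at most `k` resolvers in the
whole grid, then no `(k+1)`-resolving set exists. -/
lemma no_kres_of_pair {n1 n2 n3 k : ℕ} (u v : GridV n1 n2 n3) (huv : u ≠ v)
    (hc : (Finset.univ.filter (fun w => gridResolves w u v)).card ≤ k)
    (S : Finset (GridV n1 n2 n3)) : ¬ IsKResolvingSet (k + 1) S := by
  intro hS
  have h1 := hS u v huv
  have h2 : (S.filter (fun w => gridResolves w u v)).card ≤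
      (Finset.univ.filter (fun w => gridResolves w u v)).card :=
    Finset.card_le_card (Finset.filter_subset_filter _ (Finset.subset_univ S))
  omega

end Aux

/-- If `k ≥ α_M(n1,n2,n3)`, then the 3D grid has no `(k+1)`-resolving set. -/
theorem grid3D_no_kplus1_resolving_set (n1 n2 n3 k : ℕ)
    (h1 : 2 ≤ n1) (h2 : 2 ≤ n2) (h3 : 2 ≤ n3)
    (hk : alphaM n1 n2 n3 ≤ k) :
    ¬ ∃ S : Finset (GridV n1 n2 n3), IsKResolvingSet (k + 1) S := by
  rintro ⟨S, hS⟩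
  have hmin : n1 * (n2 + n3 - 2) ≤ k ∨ n2 * (n1 + n3 - 2) ≤ k ∨
      n3 * (n1 + n2 - 2) ≤ k := by
    unfold alphaM at hk; omega
  rcases hmin with h | h | h
  · refine no_kres_of_pair (k := k)
      (⟨0, by omega⟩, ⟨1, by omega⟩, ⟨0, by omega⟩)
      (⟨0, by omega⟩, ⟨0, by omega⟩, ⟨1, by omega⟩) ?_ ?_ S hS
    · intro he
      have := congrArg (fun z : GridV n1 n2 n3 => z.2.1.val) he
      simp at this
    · have he : (Finset.univ.filter (fun w : GridV n1 n2 n3 =>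
          gridResolves w (⟨0, by omega⟩, ⟨1, by omega⟩, ⟨0, by omega⟩)
            (⟨0, by omega⟩, ⟨0, by omega⟩, ⟨1, by omega⟩))) =
          Finset.univ.filter (fun w : GridV n1 n2 n3 =>
            ¬(w.2.1.val = 0 ↔ w.2.2.val = 0)) := by
        apply Finset.filter_congr
        intro w _
        simp only [gridResolves, gridDist]
        constructor <;> (intro hw; omega)
      rw [he, countA n1 n2 n3 (by omega) (by omega)]
      exact h
  · refine no_kres_of_pair (k := k)
      (⟨1, by omega⟩, ⟨0, by omega⟩, ⟨0, by omega⟩)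
      (⟨0, by omega⟩, ⟨0, by omega⟩, ⟨1, by omega⟩) ?_ ?_ S hS
    · intro he
      have := congrArg (fun z : GridV n1 n2 n3 => z.1.val) he
      simp at this
    · have he : (Finset.univ.filter (fun w : GridV n1 n2 n3 =>
          gridResolves w (⟨1, by omega⟩, ⟨0, by omega⟩, ⟨0, by omega⟩)
            (⟨0, by omega⟩, ⟨0, by omega⟩, ⟨1, by omega⟩))) =
          Finset.univ.filter (fun w : GridV n1 n2 n3 =>
            ¬(w.1.val = 0 ↔ w.2.2.val = 0)) := by
        apply Finset.filter_congr
        intro w _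
        simp only [gridResolves, gridDist]
        constructor <;> (intro hw; omega)
      rw [he, countB n1 n2 n3 (by omega) (by omega)]
      exact h
  · refine no_kres_of_pair (k := k)
      (⟨1, by omega⟩, ⟨0, by omega⟩, ⟨0, by omega⟩)
      (⟨0, by omega⟩, ⟨1, by omega⟩, ⟨0, by omega⟩) ?_ ?_ S hS
    · intro he
      have := congrArg (fun z : GridV n1 n2 n3 => z.1.val) he
      simp at this
    · have he : (Finset.univ.filter (fun w : GridV n1 n2 n3 =>
          gridResolves w (⟨1, by omega⟩, ⟨0, by omega⟩, ⟨0, by omega⟩)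
            (⟨0, by omega⟩, ⟨1, by omega⟩, ⟨0, by omega⟩))) =
          Finset.univ.filter (fun w : GridV n1 n2 n3 =>
            ¬(w.1.val = 0 ↔ w.2.1.val = 0)) := by
        apply Finset.filter_congr
        intro w _
        simp only [gridResolves, gridDist]
        constructor <;> (intro hw; omega)
      rw [he, countC n1 n2 n3 (by omega) (by omega)]
      exact h
end

section
/- Let n1, n2, n3 ≥ 2 and let k ≥ 2 be an integer. Every (k+1)-resolving set of the 3D grid P_{n1}□P_{n2}□P_{n3} has cardinality at least 2k+2; hence if a (k+1)-resolving set exists, then dim_{k+1}(P_{n1}□P_{n2}□P_{n3}) ≥ 2k+2. -/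
/-- Every `(k+1)`-resolving set of the 3D grid has cardinality at least `2k+2`;
hence if such a set exists, the `(k+1)`-metric dimension is at least `2k+2`. -/
theorem grid3D_kplus1_dim_lower_bound (n1 n2 n3 k : ℕ)
    (h1 : 2 ≤ n1) (h2 : 2 ≤ n2) (h3 : 2 ≤ n3) (hk : 2 ≤ k) :
    (∀ S : Finset (GridV n1 n2 n3), IsKResolvingSet (k + 1) S → 2 * k + 2 ≤ S.card) ∧
    ((∃ S : Finset (GridV n1 n2 n3), IsKResolvingSet (k + 1) S) →
      2 * k + 2 ≤ gridKMetricDim (k + 1) n1 n2 n3) := by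
  have main : ∀ S : Finset (GridV n1 n2 n3), IsKResolvingSet (k + 1) S →
      2 * k + 2 ≤ S.card := by
    intro S hS
    have a : GridV n1 n2 n3 := (⟨0, by omega⟩, ⟨0, by omega⟩, ⟨0, by omega⟩)
    set p1 : GridV n1 n2 n3 := (⟨0, by omega⟩, ⟨0, by omega⟩, ⟨0, by omega⟩) with hp1
    set p2 : GridV n1 n2 n3 := (⟨1, by omega⟩, ⟨1, by omega⟩, ⟨0, by omega⟩) with hp2
    set q1 : GridV n1 n2 n3 := (⟨1, by omega⟩, ⟨0, by omega⟩, ⟨0, by omega⟩) with hq1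
    set q2 : GridV n1 n2 n3 := (⟨0, by omega⟩, ⟨1, by omega⟩, ⟨0, by omega⟩) with hq2
    have hne1 : p1 ≠ p2 := by
      simp [hp1, hp2, Prod.ext_iff, Fin.ext_iff]
    have hne2 : q1 ≠ q2 := by
      simp [hq1, hq2, Prod.ext_iff, Fin.ext_iff]
    have hc1 := hS p1 p2 hne1
    have hc2 := hS q1 q2 hne2
    have hdisj : Disjoint (S.filter (fun w => gridResolves w p1 p2))
        (S.filter (fun w => gridResolves w q1 q2)) := by
      rw [Finset.disjoint_left]
      intro w hw1 hw2
      simp only [Finset.mem_filter] at hw1 hw2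
      have r1 := hw1.2
      have r2 := hw2.2
      simp only [gridResolves, gridDist, hp1, hp2, hq1, hq2] at r1 r2
      omega
    have hsub : (S.filter (fun w => gridResolves w p1 p2)) ∪
        (S.filter (fun w => gridResolves w q1 q2)) ⊆ S := by
      intro w hw
      rcases Finset.mem_union.mp hw with h | h <;> exact (Finset.mem_filter.mp h).1
    calc 2 * k + 2 = (k + 1) + (k + 1) := by ring
      _ ≤ (S.filter (fun w => gridResolves w p1 p2)).card +
          (S.filter (fun w => gridResolves w q1 q2)).card := add_le_add hc1 hc2
      _ = ((S.filter (fun w => gridResolves w p1 p2)) ∪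
          (S.filter (fun w => gridResolves w q1 q2))).card :=
            (Finset.card_union_of_disjoint hdisj).symm
      _ ≤ S.card := Finset.card_le_card hsub
  refine ⟨main, ?_⟩
  rintro ⟨S, hS⟩
  have hne : { c | ∃ S : Finset (GridV n1 n2 n3), IsKResolvingSet (k + 1) S ∧
      S.card = c }.Nonempty := ⟨S.card, S, hS, rfl⟩
  obtain ⟨T, hT, hTc⟩ := Nat.sInf_mem hne
  rw [gridKMetricDim, ← hTc]
  exact main T hT
end

section
/- Let n1, n2, n3 ≥ 2 and let k ≥ 2 be an even integer. Every (k+1)-resolving set of the 3D grid P_{n1}□P_{n2}□P_{n3} has cardinality at least 2k+3; hence if a (k+1)-resolving set exists, then dim_{k+1}(P_{n1}□P_{n2}□P_{n3}) ≥ 2k+3. -/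
-- auxiliary: given a pair whose resolver set within S is exactly {w | P w},
-- derive the card bound
lemma card_filter_ge {n1 n2 n3 : ℕ} (k : ℕ) (S : Finset (GridV n1 n2 n3))
    (h : IsKResolvingSet (k+1) S) (u v : GridV n1 n2 n3) (huv : u ≠ v)
    (P : GridV n1 n2 n3 → Prop) [DecidablePred P]
    (hP : ∀ w, gridResolves w u v ↔ P w) :
    k + 1 ≤ (S.filter P).card := by
  have := h u v huv
  rwa [Finset.filter_congr (fun w _ => by classical exact hP w)] at this


/-- For even `k`, every `(k+1)`-resolving set of the 3D grid has cardinality at least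
`2k+3`; hence if such a set exists, the `(k+1)`-metric dimension is at least `2k+3`. -/
theorem grid3D_kplus1_dim_lower_bound_even (n1 n2 n3 k : ℕ)
    (h1 : 2 ≤ n1) (h2 : 2 ≤ n2) (h3 : 2 ≤ n3) (hk : 2 ≤ k) (hke : Even k) :
    (∀ S : Finset (GridV n1 n2 n3), IsKResolvingSet (k + 1) S → 2 * k + 3 ≤ S.card) ∧
    ((∃ S : Finset (GridV n1 n2 n3), IsKResolvingSet (k + 1) S) →
      2 * k + 3 ≤ gridKMetricDim (k + 1) n1 n2 n3) := by
  classical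
  have main : ∀ S : Finset (GridV n1 n2 n3), IsKResolvingSet (k + 1) S → 2 * k + 3 ≤ S.card := by
    intro S hS
    set x0 : Fin n1 := ⟨0, by omega⟩
    set x1 : Fin n1 := ⟨1, by omega⟩
    set y0 : Fin n2 := ⟨0, by omega⟩
    set y1 : Fin n2 := ⟨1, by omega⟩
    set z0 : Fin n3 := ⟨0, by omega⟩
    set z1 : Fin n3 := ⟨1, by omega⟩
    -- predicates
    set P : GridV n1 n2 n3 → Prop := fun w => (w.1.val = 0 ↔ w.2.1.val = 0) with hPdef
    set Q : GridV n1 n2 n3 → Prop := fun w => (w.1.val = 0 ↔ w.2.2.val = 0) with hQdef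
    set R : GridV n1 n2 n3 → Prop := fun w => (w.2.1.val = 0 ↔ w.2.2.val = 0) with hRdef
    have hA1 : k + 1 ≤ (S.filter P).card := by
      refine card_filter_ge k S hS (x0, y0, z0) (x1, y1, z0) ?_ P ?_
      · simp [Prod.ext_iff, Fin.ext_iff, x0, x1]
      · intro w; simp only [gridResolves, gridDist, hPdef, x0, x1, y0, y1, z0]; omega
    have hB1 : k + 1 ≤ (S.filter (fun w => ¬ P w)).card := by
      refine card_filter_ge k S hS (x1, y0, z0) (x0, y1, z0) ?_ _ ?_
      · simp [Prod.ext_iff, Fin.ext_iff, x0, x1]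
      · intro w; simp only [gridResolves, gridDist, hPdef, x0, x1, y0, y1, z0]; omega
    have hA2 : k + 1 ≤ (S.filter Q).card := by
      refine card_filter_ge k S hS (x0, y0, z0) (x1, y0, z1) ?_ Q ?_
      · simp [Prod.ext_iff, Fin.ext_iff, x0, x1]
      · intro w; simp only [gridResolves, gridDist, hQdef, x0, x1, y0, z0, z1]; omega
    have hB2 : k + 1 ≤ (S.filter (fun w => ¬ Q w)).card := by
      refine card_filter_ge k S hS (x1, y0, z0) (x0, y0, z1) ?_ _ ?_
      · simp [Prod.ext_iff, Fin.ext_iff, x0, x1]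
      · intro w; simp only [gridResolves, gridDist, hQdef, x0, x1, y0, z0, z1]; omega
    have hA3 : k + 1 ≤ (S.filter R).card := by
      refine card_filter_ge k S hS (x0, y0, z0) (x0, y1, z1) ?_ R ?_
      · simp [Prod.ext_iff, Fin.ext_iff, y0, y1]
      · intro w; simp only [gridResolves, gridDist, hRdef, x0, y0, y1, z0, z1]; omega
    have hB3 : k + 1 ≤ (S.filter (fun w => ¬ R w)).card := by
      refine card_filter_ge k S hS (x0, y1, z0) (x0, y0, z1) ?_ _ ?_
      · simp [Prod.ext_iff, Fin.ext_iff, y0, y1]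
      · intro w; simp only [gridResolves, gridDist, hRdef, x0, y0, y1, z0, z1]; omega
    have hsplit1 := Finset.card_filter_add_card_filter_not (s := S) (p := P)
    have hsplit2 := Finset.card_filter_add_card_filter_not (s := S) (p := Q)
    have hsplit3 := Finset.card_filter_add_card_filter_not (s := S) (p := R)
    by_contra hcon
    push_neg at hcon
    -- now all six cards are exactly k+1
    have e1 : (S.filter (fun w => ¬ P w)).card = k + 1 := by omega
    have e2 : (S.filter (fun w => ¬ Q w)).card = k + 1 := by omega
    have e3 : (S.filter (fun w => ¬ R w)).card = k + 1 := by omega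
    -- parity argument
    have hsum : ∑ w ∈ S, ((if ¬ P w then 1 else 0) + (if ¬ Q w then 1 else 0)
        + (if ¬ R w then 1 else 0) : ℕ) = 3 * (k + 1) := by
      rw [Finset.sum_add_distrib, Finset.sum_add_distrib,
        Finset.sum_boole, Finset.sum_boole, Finset.sum_boole]
      push_cast
      omega
    have heven : Even (∑ w ∈ S, ((if ¬ P w then 1 else 0) + (if ¬ Q w then 1 else 0)
        + (if ¬ R w then 1 else 0) : ℕ)) := by
      apply Finset.even_sum
      intro w _
      by_cases hx : w.1.val = 0 <;> by_cases hy : w.2.1.val = 0 <;>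
        by_cases hz : w.2.2.val = 0 <;>
        simp [hPdef, hQdef, hRdef, hx, hy, hz]
    rw [hsum] at heven
    obtain ⟨j, hj⟩ := hke
    obtain ⟨i, hi⟩ := heven
    omega
  refine ⟨main, ?_⟩
  rintro ⟨S, hS⟩
  have hne : {c | ∃ T : Finset (GridV n1 n2 n3), IsKResolvingSet (k+1) T ∧ T.card = c}.Nonempty :=
    ⟨S.card, S, hS, rfl⟩
  rw [gridKMetricDim]
  apply le_csInf hne
  rintro c ⟨T, hT, rfl⟩
  exact main T hT
end

section
/- Let n1, n2, n3 ≥ 2 and let k be an odd integer with 2 ≤ k < α_m(n1,n2,n3). Then dim_{k+1}(P_{n1}□P_{n2}□P_{n3}) = 2k+2. -/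
set_option maxHeartbeats 1000000
set_option synthInstance.maxHeartbeats 400000


/-- signed difference profile -/
def ffD (p q t : ℤ) : ℤ := ((t - p).natAbs : ℤ) - ((t - q).natAbs : ℤ)

lemma ffD_self (p t : ℤ) : ffD p p t = 0 := by unfold ffD; omega

lemma ffD_zero (p q : ℤ) (hp : 0 ≤ p) (hq : 0 ≤ q) : ffD p q 0 = p - q := by
  unfold ffD; omega

lemma ffD_top (p q T : ℤ) (hp : p ≤ T) (hq : q ≤ T) : ffD p q T = q - p := by
  unfold ffD; omega

lemma ffD_eq_zero {p q t : ℤ} (h : ffD p q t = 0) : p = q ∨ 2*t = p + q := by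
  unfold ffD at h; omega

lemma dist_sub_eq {n1 n2 n3 : ℕ} (u v w : GridV n1 n2 n3) :
    (gridDist w u : ℤ) - (gridDist w v : ℤ) =
      ffD (u.1 : ℤ) (v.1 : ℤ) (w.1 : ℤ) + ffD (u.2.1 : ℤ) (v.2.1 : ℤ) (w.2.1 : ℤ)
        + ffD (u.2.2 : ℤ) (v.2.2 : ℤ) (w.2.2 : ℤ) := by
  unfold gridDist ffD
  push_cast
  ring

lemma resolves_iff {n1 n2 n3 : ℕ} (u v w : GridV n1 n2 n3) :
    gridResolves w u v ↔
      ffD (u.1 : ℤ) (v.1 : ℤ) (w.1 : ℤ) + ffD (u.2.1 : ℤ) (v.2.1 : ℤ) (w.2.1 : ℤ)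
        + ffD (u.2.2 : ℤ) (v.2.2 : ℤ) (w.2.2 : ℤ) ≠ 0 := by
  rw [← dist_sub_eq]
  unfold gridResolves
  constructor
  · intro h h'
    exact h (by exact_mod_cast (by omega : (gridDist w u : ℤ) = (gridDist w v : ℤ)))
  · intro h h'
    exact h (by rw [h']; ring)

/-- sign lemma: among the four values ±A±B+t, at most two vanish; constructively,
there are two sign pairs differing in the second component with nonzero value. -/
lemma signs_two (A B t : ℤ) (h : ¬(A = 0 ∧ B = 0)) :
    ∃ p q : Bool × Bool, p ≠ q ∧
      ((if p.1 then A else -A) + (if p.2 then B else -B) + t ≠ 0) ∧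
      ((if q.1 then A else -A) + (if q.2 then B else -B) + t ≠ 0) := by
  by_cases hA : A = 0
  · have hB : B ≠ 0 := fun hB => h ⟨hA, hB⟩
    by_cases h1 : -A + -B + t = 0 <;> by_cases h2 : A + -B + t = 0
    · exact ⟨(false, true), (true, true), by simp, by simp; omega, by simp; omega⟩
    · exact ⟨(false, true), (true, false), by simp, by simp; omega, by simp; omega⟩
    · exact ⟨(false, false), (true, true), by simp, by simp; omega, by simp; omega⟩
    · exact ⟨(false, false), (true, false), by simp, by simp; omega, by simp; omega⟩
  · by_cases h1 : -A + -B + t = 0 <;> by_cases h2 : -A + B + t = 0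
    · exact ⟨(true, false), (true, true), by simp, by simp; omega, by simp; omega⟩
    · exact ⟨(true, false), (false, true), by simp, by simp; omega, by simp; omega⟩
    · exact ⟨(false, false), (true, true), by simp, by simp; omega, by simp; omega⟩
    · exact ⟨(false, false), (false, true), by simp, by simp; omega, by simp; omega⟩

/-- corner coordinate -/
def corC (n : ℕ) (h : 0 < n) : Bool → Fin n
  | false => ⟨0, h⟩
  | true => ⟨n - 1, by omega⟩

@[simp] lemma corC_false (n : ℕ) (h : 0 < n) : (corC n h false).val = 0 := rfl
@[simp] lemma corC_true (n : ℕ) (h : 0 < n) : (corC n h true).val = n - 1 := rfl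

/-- embedding of the abstract index set into the grid -/
def eMap (n1 n2 n3 t1 t2 t3 : ℕ) (b1 : t1 + 2 ≤ n1) (b2 : t2 + 2 ≤ n2) (b3 : t3 ≤ n3)
    (h2 : 2 ≤ n2) (h3 : 2 ≤ n3) :
    (Bool × Bool) × (Fin t3 ⊕ Fin t2 ⊕ Fin t1) → GridV n1 n2 n3
  | ((ε, δ), .inl z) => (corC n1 (by omega) ε, corC n2 (by omega) δ, Fin.castLE b3 z)
  | ((ε, γ), .inr (.inl y)) =>
      (corC n1 (by omega) ε, ⟨y.val + 1, by have := y.2; omega⟩, corC n3 (by omega) γ)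
  | ((δ, γ), .inr (.inr x)) =>
      (⟨x.val + 1, by have := x.2; omega⟩, corC n2 (by omega) δ, corC n3 (by omega) γ)

lemma eMap_injective (n1 n2 n3 t1 t2 t3 : ℕ) (b1 : t1 + 2 ≤ n1) (b2 : t2 + 2 ≤ n2)
    (b3 : t3 ≤ n3) (h2 : 2 ≤ n2) (h3 : 2 ≤ n3) :
    Function.Injective (eMap n1 n2 n3 t1 t2 t3 b1 b2 b3 h2 h3) := by
  rintro ⟨⟨ε, δ⟩, (z | y | x)⟩ ⟨⟨ε', δ'⟩, (z' | y' | x')⟩ h <;>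
    [skip; skip; skip; skip; skip; skip; skip; skip; skip] <;>
    · have h1 := congrArg (fun w : GridV n1 n2 n3 => w.1.val) h
      have h2' := congrArg (fun w : GridV n1 n2 n3 => w.2.1.val) h
      have h3' := congrArg (fun w : GridV n1 n2 n3 => w.2.2.val) h
      simp only [eMap] at h1 h2' h3'
      cases ε <;> cases δ <;> cases ε' <;> cases δ' <;>
        simp only [corC_false, corC_true, Fin.coe_castLE] at h1 h2' h3' <;>
        first
        | (exfalso;
           first
           | (have := z.2; have := y'.2; omega)
           | (have := z'.2; have := y.2; omega)
           | (have := z.2; have := x'.2; omega)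
           | (have := z'.2; have := x.2; omega)
           | (have := y.2; have := x'.2; omega)
           | (have := y'.2; have := x.2; omega)
           | (have := y.2; omega)
           | (have := y'.2; omega)
           | (have := x.2; omega)
           | (have := x'.2; omega)
           | omega)
        | (refine Prod.ext (Prod.ext rfl rfl) ?_;
           first
           | (exact congrArg Sum.inl (Fin.ext (by omega)))
           | (exact congrArg Sum.inr (congrArg Sum.inl (Fin.ext (by omega))))
           | (exact congrArg Sum.inr (congrArg Sum.inr (Fin.ext (by omega)))))

def DD {n1 n2 n3 : ℕ} (u v w : GridV n1 n2 n3) : ℤ :=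
  ffD (u.1 : ℤ) (v.1 : ℤ) (w.1 : ℤ) + ffD (u.2.1 : ℤ) (v.2.1 : ℤ) (w.2.1 : ℤ)
    + ffD (u.2.2 : ℤ) (v.2.2 : ℤ) (w.2.2 : ℤ)

lemma resolves_iff' {n1 n2 n3 : ℕ} (u v w : GridV n1 n2 n3) :
    gridResolves w u v ↔ DD u v w ≠ 0 := resolves_iff u v w

lemma ffD_corC {n : ℕ} (h : 0 < n) (b : Bool) (p q : Fin n) :
    ffD (p : ℤ) (q : ℤ) ((corC n h b : Fin n) : ℤ)
      = if b then (q : ℤ) - (p : ℤ) else (p : ℤ) - (q : ℤ) := by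
  have hp := p.2; have hq := q.2
  cases b <;> simp only [corC_false, corC_true, if_true, if_false, Bool.false_eq_true] <;>
    · show ffD _ _ _ = _
      unfold ffD
      omega

section eval
variable {n1 n2 n3 t1 t2 t3 : ℕ} {b1 : t1 + 2 ≤ n1} {b2 : t2 + 2 ≤ n2} {b3 : t3 ≤ n3}
  {h2 : 2 ≤ n2} {h3 : 2 ≤ n3} (u v : GridV n1 n2 n3)

lemma DD_eMap_z (ε δ : Bool) (z : Fin t3) :
    DD u v (eMap n1 n2 n3 t1 t2 t3 b1 b2 b3 h2 h3 ((ε, δ), .inl z)) =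
      (if ε then (v.1 : ℤ) - (u.1 : ℤ) else (u.1 : ℤ) - (v.1 : ℤ)) +
      (if δ then (v.2.1 : ℤ) - (u.2.1 : ℤ) else (u.2.1 : ℤ) - (v.2.1 : ℤ)) +
      ffD (u.2.2 : ℤ) (v.2.2 : ℤ) (z.val : ℤ) := by
  cases ε <;> cases δ <;>
    · simp only [eMap]
      show ffD _ _ _ + ffD _ _ _ + ffD _ _ _ = _
      rw [ffD_corC, ffD_corC]
      simp only [if_true, if_false, Bool.false_eq_true, Fin.coe_castLE, Fin.val_mk]
      all_goals (push_cast; ring)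

lemma DD_eMap_y (ε γ : Bool) (y : Fin t2) :
    DD u v (eMap n1 n2 n3 t1 t2 t3 b1 b2 b3 h2 h3 ((ε, γ), .inr (.inl y))) =
      (if ε then (v.1 : ℤ) - (u.1 : ℤ) else (u.1 : ℤ) - (v.1 : ℤ)) +
      ffD (u.2.1 : ℤ) (v.2.1 : ℤ) ((y.val : ℤ) + 1) +
      (if γ then (v.2.2 : ℤ) - (u.2.2 : ℤ) else (u.2.2 : ℤ) - (v.2.2 : ℤ)) := by
  cases ε <;> cases γ <;>
    · simp only [eMap]
      show ffD _ _ _ + ffD _ _ _ + ffD _ _ _ = _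
      rw [ffD_corC, ffD_corC]
      simp only [if_true, if_false, Bool.false_eq_true, Fin.coe_castLE, Fin.val_mk]
      all_goals (push_cast; ring)

lemma DD_eMap_x (δ γ : Bool) (x : Fin t1) :
    DD u v (eMap n1 n2 n3 t1 t2 t3 b1 b2 b3 h2 h3 ((δ, γ), .inr (.inr x))) =
      ffD (u.1 : ℤ) (v.1 : ℤ) ((x.val : ℤ) + 1) +
      (if δ then (v.2.1 : ℤ) - (u.2.1 : ℤ) else (u.2.1 : ℤ) - (v.2.1 : ℤ)) +
      (if γ then (v.2.2 : ℤ) - (u.2.2 : ℤ) else (u.2.2 : ℤ) - (v.2.2 : ℤ)) := by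
  cases δ <;> cases γ <;>
    · simp only [eMap]
      show ffD _ _ _ + ffD _ _ _ + ffD _ _ _ = _
      rw [ffD_corC, ffD_corC]
      simp only [if_true, if_false, Bool.false_eq_true, Fin.coe_castLE, Fin.val_mk]
      all_goals (push_cast; ring)

end eval

lemma signs_two' (a a' b b' t : ℤ) (ha : a + a' = 0) (hb : b + b' = 0)
    (h : ¬(a = 0 ∧ b = 0)) :
    ∃ p q : Bool × Bool, p ≠ q ∧
      ((if p.1 then a else a') + (if p.2 then b else b') + t ≠ 0) ∧
      ((if q.1 then a else a') + (if q.2 then b else b') + t ≠ 0) := by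
  have ha' : a' = -a := by omega
  have hb' : b' = -b := by omega
  subst ha' hb'
  exact signs_two a b t h

open Finset in
lemma count_resolved (n1 n2 n3 t1 t2 t3 : ℕ) (b1 : t1 + 2 ≤ n1) (b2 : t2 + 2 ≤ n2)
    (b3 : t3 ≤ n3) (h2 : 2 ≤ n2) (h3 : 2 ≤ n3) (ht3 : 2 ≤ t3)
    (u v : GridV n1 n2 n3) (huv : u ≠ v) :
    2 * (t3 + t2 + t1) ≤ (Finset.univ.filter
      (fun i => gridResolves (eMap n1 n2 n3 t1 t2 t3 b1 b2 b3 h2 h3 i) u v)).card := by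
  classical
  set E := eMap n1 n2 n3 t1 t2 t3 b1 b2 b3 h2 h3 with hE
  have hJcard : (univ : Finset (Fin t3 ⊕ Fin t2 ⊕ Fin t1)).card = t3 + t2 + t1 := by
    simp only [Finset.card_univ, Fintype.card_sum, Fintype.card_fin]
    omega
  have hIcard : (univ : Finset ((Bool × Bool) × (Fin t3 ⊕ Fin t2 ⊕ Fin t1))).card
      = 4 * (t3 + t2 + t1) := by
    simp [Finset.card_univ]
    omega
  -- case A: at least two coordinates differ
  have caseA : ¬(u.1 = v.1 ∧ u.2.1 = v.2.1) → ¬(u.1 = v.1 ∧ u.2.2 = v.2.2) →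
      ¬(u.2.1 = v.2.1 ∧ u.2.2 = v.2.2) →
      2 * (t3 + t2 + t1) ≤ (Finset.univ.filter (fun i => gridResolves (E i) u v)).card := by
    intro hA12 hA13 hA23
    have key : ∀ j : Fin t3 ⊕ Fin t2 ⊕ Fin t1,
        2 ≤ ((univ.filter (fun i => gridResolves (E i) u v)).filter
          (fun i => i.2 = j)).card := by
      intro j
      have ne12 : ¬((v.1:ℤ) - (u.1:ℤ) = 0 ∧ (v.2.1:ℤ) - (u.2.1:ℤ) = 0) := by
        intro ⟨x1, x2⟩
        exact hA12 ⟨Fin.ext (by omega), Fin.ext (by omega)⟩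
      have ne13 : ¬((v.1:ℤ) - (u.1:ℤ) = 0 ∧ (v.2.2:ℤ) - (u.2.2:ℤ) = 0) := by
        intro ⟨x1, x2⟩
        exact hA13 ⟨Fin.ext (by omega), Fin.ext (by omega)⟩
      have ne23 : ¬((v.2.1:ℤ) - (u.2.1:ℤ) = 0 ∧ (v.2.2:ℤ) - (u.2.2:ℤ) = 0) := by
        intro ⟨x1, x2⟩
        exact hA23 ⟨Fin.ext (by omega), Fin.ext (by omega)⟩
      rcases j with z | y | x
      · obtain ⟨p, q, hpq, hp, hq⟩ := signs_two' ((v.1:ℤ) - (u.1:ℤ)) ((u.1:ℤ) - (v.1:ℤ))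
          ((v.2.1:ℤ) - (u.2.1:ℤ)) ((u.2.1:ℤ) - (v.2.1:ℤ))
          (ffD (u.2.2:ℤ) (v.2.2:ℤ) (z.val:ℤ)) (by ring) (by ring) ne12
        have hsub : ({(p, Sum.inl z), (q, Sum.inl z)} :
            Finset ((Bool × Bool) × (Fin t3 ⊕ Fin t2 ⊕ Fin t1))) ⊆
            (univ.filter (fun i => gridResolves (E i) u v)).filter
              (fun i => i.2 = Sum.inl z) := by
          intro i hi
          simp only [Finset.mem_insert, Finset.mem_singleton] at hi
          rcases hi with rfl | rfl <;>
            · simp only [Finset.mem_filter, Finset.mem_univ, true_and]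
              refine ⟨(resolves_iff' u v _).mpr ?_, by simp⟩
              rw [hE, DD_eMap_z]
              first
                | exact hp
                | exact hq
        calc (2:ℕ) = ({(p, Sum.inl z), (q, Sum.inl z)} :
              Finset ((Bool × Bool) × (Fin t3 ⊕ Fin t2 ⊕ Fin t1))).card := by
              rw [Finset.card_pair]
              simp [Prod.ext_iff, hpq]
          _ ≤ _ := Finset.card_le_card hsub
      · obtain ⟨p, q, hpq, hp, hq⟩ := signs_two' ((v.1:ℤ) - (u.1:ℤ)) ((u.1:ℤ) - (v.1:ℤ))
          ((v.2.2:ℤ) - (u.2.2:ℤ)) ((u.2.2:ℤ) - (v.2.2:ℤ))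
          (ffD (u.2.1:ℤ) (v.2.1:ℤ) ((y.val:ℤ) + 1)) (by ring) (by ring) ne13
        have hsub : ({(p, Sum.inr (Sum.inl y)), (q, Sum.inr (Sum.inl y))} :
            Finset ((Bool × Bool) × (Fin t3 ⊕ Fin t2 ⊕ Fin t1))) ⊆
            (univ.filter (fun i => gridResolves (E i) u v)).filter
              (fun i => i.2 = Sum.inr (Sum.inl y)) := by
          intro i hi
          simp only [Finset.mem_insert, Finset.mem_singleton] at hi
          rcases hi with rfl | rfl <;>
            · simp only [Finset.mem_filter, Finset.mem_univ, true_and]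
              refine ⟨(resolves_iff' u v _).mpr ?_, by simp⟩
              rw [hE, DD_eMap_y]
              first
                | (intro h0; exact hp (by linarith))
                | (intro h0; exact hq (by linarith))
        calc (2:ℕ) = ({(p, Sum.inr (Sum.inl y)), (q, Sum.inr (Sum.inl y))} :
              Finset ((Bool × Bool) × (Fin t3 ⊕ Fin t2 ⊕ Fin t1))).card := by
              rw [Finset.card_pair]
              simp [Prod.ext_iff, hpq]
          _ ≤ _ := Finset.card_le_card hsub
      · obtain ⟨p, q, hpq, hp, hq⟩ := signs_two' ((v.2.1:ℤ) - (u.2.1:ℤ)) ((u.2.1:ℤ) - (v.2.1:ℤ))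
          ((v.2.2:ℤ) - (u.2.2:ℤ)) ((u.2.2:ℤ) - (v.2.2:ℤ))
          (ffD (u.1:ℤ) (v.1:ℤ) ((x.val:ℤ) + 1)) (by ring) (by ring) ne23
        have hsub : ({(p, Sum.inr (Sum.inr x)), (q, Sum.inr (Sum.inr x))} :
            Finset ((Bool × Bool) × (Fin t3 ⊕ Fin t2 ⊕ Fin t1))) ⊆
            (univ.filter (fun i => gridResolves (E i) u v)).filter
              (fun i => i.2 = Sum.inr (Sum.inr x)) := by
          intro i hi
          simp only [Finset.mem_insert, Finset.mem_singleton] at hi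
          rcases hi with rfl | rfl <;>
            · simp only [Finset.mem_filter, Finset.mem_univ, true_and]
              refine ⟨(resolves_iff' u v _).mpr ?_, by simp⟩
              rw [hE, DD_eMap_x]
              first
                | (intro h0; exact hp (by linarith))
                | (intro h0; exact hq (by linarith))
        calc (2:ℕ) = ({(p, Sum.inr (Sum.inr x)), (q, Sum.inr (Sum.inr x))} :
              Finset ((Bool × Bool) × (Fin t3 ⊕ Fin t2 ⊕ Fin t1))).card := by
              rw [Finset.card_pair]
              simp [Prod.ext_iff, hpq]
          _ ≤ _ := Finset.card_le_card hsub
    rw [Finset.card_eq_sum_card_fiberwise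
      (f := fun i : (Bool × Bool) × (Fin t3 ⊕ Fin t2 ⊕ Fin t1) => i.2)
      (t := univ) (fun x _ => Finset.mem_univ _)]
    calc 2 * (t3 + t2 + t1) = ∑ _j ∈ (univ : Finset (Fin t3 ⊕ Fin t2 ⊕ Fin t1)), 2 := by
          rw [Finset.sum_const, hJcard, smul_eq_mul]; ring
      _ ≤ _ := Finset.sum_le_sum (fun j _ => key j)
  -- case B: exactly one coordinate differs
  have i1eq : u.1 = v.1 → ((u.1:ℤ) = (v.1:ℤ)) := fun h => by rw [h]
  have i2eq : u.2.1 = v.2.1 → ((u.2.1:ℤ) = (v.2.1:ℤ)) := fun h => by rw [h]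
  have i3eq : u.2.2 = v.2.2 → ((u.2.2:ℤ) = (v.2.2:ℤ)) := fun h => by rw [h]
  have i1ne : u.1 ≠ v.1 → ((u.1:ℤ) ≠ (v.1:ℤ)) :=
    fun h h' => h (Fin.ext (by exact_mod_cast h'))
  have i2ne : u.2.1 ≠ v.2.1 → ((u.2.1:ℤ) ≠ (v.2.1:ℤ)) :=
    fun h h' => h (Fin.ext (by exact_mod_cast h'))
  have i3ne : u.2.2 ≠ v.2.2 → ((u.2.2:ℤ) ≠ (v.2.2:ℤ)) :=
    fun h h' => h (Fin.ext (by exact_mod_cast h'))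
  have hcount : ∀ P : (Bool × Bool) × (Fin t3 ⊕ Fin t2 ⊕ Fin t1) → Prop,
      (∀ i, P i ↔ gridResolves (E i) u v) →
      (univ.filter (fun i => ¬ gridResolves (E i) u v)).card ≤ 4 →
      2 * (t3 + t2 + t1) ≤ (univ.filter (fun i => gridResolves (E i) u v)).card := by
    intro P _ hneg
    have hsplit := Finset.card_filter_add_card_filter_not
      (s := (univ : Finset ((Bool × Bool) × (Fin t3 ⊕ Fin t2 ⊕ Fin t1))))
      (p := fun i => gridResolves (E i) u v)
    omega
  have caseB3 : u.1 = v.1 → u.2.1 = v.2.1 → u.2.2 ≠ v.2.2 →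
      2 * (t3 + t2 + t1) ≤ (univ.filter (fun i => gridResolves (E i) u v)).card := by
    intro c1 c2 c3
    have i1 := i1eq c1; have i2 := i2eq c2; have i3 := i3ne c3
    have struct : ∀ (r : Bool × Bool) (j : Fin t3 ⊕ Fin t2 ⊕ Fin t1),
        ¬ gridResolves (E (r, j)) u v →
        ∃ z : Fin t3, j = Sum.inl z ∧ 2 * (z.val : ℤ) = (u.2.2:ℤ) + (v.2.2:ℤ) := by
      intro r j hnr
      have hD : DD u v (E (r, j)) = 0 := by
        by_contra hD
        exact hnr ((resolves_iff' u v _).mpr hD)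
      rcases j with z | y | x
      · refine ⟨z, rfl, ?_⟩
        rw [hE, DD_eMap_z, i1, i2] at hD
        simp only [sub_self, ite_self, zero_add] at hD
        rcases ffD_eq_zero hD with h | h
        · exact absurd h i3
        · omega
      · exfalso
        rw [hE, DD_eMap_y, i1, i2, ffD_self] at hD
        obtain ⟨ε, γ⟩ := r
        cases ε <;> cases γ <;> simp at hD <;> omega
      · exfalso
        rw [hE, DD_eMap_x, i1, ffD_self, i2] at hD
        obtain ⟨δ, γ⟩ := r
        cases δ <;> cases γ <;> simp at hD <;> omega
    refine hcount (fun i => gridResolves (E i) u v) (fun i => Iff.rfl) ?_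
    have h4 : ((univ : Finset (Bool × Bool))).card = 4 := by simp
    rw [← h4]
    refine Finset.card_le_card_of_injOn Prod.fst (fun a _ => Finset.mem_univ _) ?_
    intro i hi i' hi' hf
    simp only [Finset.mem_coe, Finset.mem_filter, Finset.mem_univ, true_and] at hi hi'
    obtain ⟨r, j⟩ := i; obtain ⟨r', j'⟩ := i'
    obtain ⟨z, rfl, hz⟩ := struct r j hi
    obtain ⟨z', rfl, hz'⟩ := struct r' j' hi'
    have hr : r = r' := hf
    subst hr
    have : z = z' := Fin.ext (by omega)
    rw [this]
  have caseB2 : u.1 = v.1 → u.2.2 = v.2.2 → u.2.1 ≠ v.2.1 →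
      2 * (t3 + t2 + t1) ≤ (univ.filter (fun i => gridResolves (E i) u v)).card := by
    intro c1 c3 c2
    have i1 := i1eq c1; have i3 := i3eq c3; have i2 := i2ne c2
    have struct : ∀ (r : Bool × Bool) (j : Fin t3 ⊕ Fin t2 ⊕ Fin t1),
        ¬ gridResolves (E (r, j)) u v →
        ∃ y : Fin t2, j = Sum.inr (Sum.inl y) ∧
          2 * (y.val : ℤ) + 2 = (u.2.1:ℤ) + (v.2.1:ℤ) := by
      intro r j hnr
      have hD : DD u v (E (r, j)) = 0 := by
        by_contra hD
        exact hnr ((resolves_iff' u v _).mpr hD)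
      rcases j with z | y | x
      · exfalso
        rw [hE, DD_eMap_z, i1, i3, ffD_self] at hD
        obtain ⟨ε, δ⟩ := r
        cases ε <;> cases δ <;> simp at hD <;> omega
      · refine ⟨y, rfl, ?_⟩
        rw [hE, DD_eMap_y, i1, i3] at hD
        simp only [sub_self, ite_self, zero_add, add_zero] at hD
        rcases ffD_eq_zero hD with h | h
        · exact absurd h i2
        · omega
      · exfalso
        rw [hE, DD_eMap_x, i1, ffD_self, i3] at hD
        obtain ⟨δ, γ⟩ := r
        cases δ <;> cases γ <;> simp at hD <;> omega
    refine hcount (fun i => gridResolves (E i) u v) (fun i => Iff.rfl) ?_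
    have h4 : ((univ : Finset (Bool × Bool))).card = 4 := by simp
    rw [← h4]
    refine Finset.card_le_card_of_injOn Prod.fst (fun a _ => Finset.mem_univ _) ?_
    intro i hi i' hi' hf
    simp only [Finset.mem_coe, Finset.mem_filter, Finset.mem_univ, true_and] at hi hi'
    obtain ⟨r, j⟩ := i; obtain ⟨r', j'⟩ := i'
    obtain ⟨y, rfl, hy⟩ := struct r j hi
    obtain ⟨y', rfl, hy'⟩ := struct r' j' hi'
    have hr : r = r' := hf
    subst hr
    have : y = y' := Fin.ext (by omega)
    rw [this]
  have caseB1 : u.2.1 = v.2.1 → u.2.2 = v.2.2 → u.1 ≠ v.1 →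
      2 * (t3 + t2 + t1) ≤ (univ.filter (fun i => gridResolves (E i) u v)).card := by
    intro c2 c3 c1
    have i2 := i2eq c2; have i3 := i3eq c3; have i1 := i1ne c1
    have struct : ∀ (r : Bool × Bool) (j : Fin t3 ⊕ Fin t2 ⊕ Fin t1),
        ¬ gridResolves (E (r, j)) u v →
        ∃ x : Fin t1, j = Sum.inr (Sum.inr x) ∧
          2 * (x.val : ℤ) + 2 = (u.1:ℤ) + (v.1:ℤ) := by
      intro r j hnr
      have hD : DD u v (E (r, j)) = 0 := by
        by_contra hD
        exact hnr ((resolves_iff' u v _).mpr hD)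
      rcases j with z | y | x
      · exfalso
        rw [hE, DD_eMap_z, i2, i3, ffD_self] at hD
        obtain ⟨ε, δ⟩ := r
        cases ε <;> cases δ <;> simp at hD <;> omega
      · exfalso
        rw [hE, DD_eMap_y, i2, ffD_self, i3] at hD
        obtain ⟨ε, γ⟩ := r
        cases ε <;> cases γ <;> simp at hD <;> omega
      · refine ⟨x, rfl, ?_⟩
        rw [hE, DD_eMap_x, i2, i3] at hD
        simp only [sub_self, ite_self, add_zero] at hD
        rcases ffD_eq_zero hD with h | h
        · exact absurd h i1
        · omega
    refine hcount (fun i => gridResolves (E i) u v) (fun i => Iff.rfl) ?_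
    have h4 : ((univ : Finset (Bool × Bool))).card = 4 := by simp
    rw [← h4]
    refine Finset.card_le_card_of_injOn Prod.fst (fun a _ => Finset.mem_univ _) ?_
    intro i hi i' hi' hf
    simp only [Finset.mem_coe, Finset.mem_filter, Finset.mem_univ, true_and] at hi hi'
    obtain ⟨r, j⟩ := i; obtain ⟨r', j'⟩ := i'
    obtain ⟨x, rfl, hx⟩ := struct r j hi
    obtain ⟨x', rfl, hx'⟩ := struct r' j' hi'
    have hr : r = r' := hf
    subst hr
    have : x = x' := Fin.ext (by omega)
    rw [this]
  by_cases c1 : u.1 = v.1 <;> by_cases c2 : u.2.1 = v.2.1 <;> by_cases c3 : u.2.2 = v.2.2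
  · exact absurd (Prod.ext c1 (Prod.ext c2 c3)) huv
  · exact caseB3 c1 c2 c3
  · exact caseB2 c1 c3 c2
  · exact caseA (fun h => c2 h.2) (fun h => c3 h.2) (fun h => c2 h.1)
  · exact caseB1 c2 c3 c1
  · exact caseA (fun h => c1 h.1) (fun h => c3 h.2) (fun h => c3 h.2)
  · exact caseA (fun h => c1 h.1) (fun h => c1 h.1) (fun h => c2 h.1)
  · exact caseA (fun h => c1 h.1) (fun h => c1 h.1) (fun h => c2 h.1)

open Finset in
lemma lower_bound (n1 n2 n3 m : ℕ) (h1 : 2 ≤ n1) (h2 : 2 ≤ n2) (h3 : 2 ≤ n3)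
    (S : Finset (GridV n1 n2 n3)) (hS : IsKResolvingSet m S) : 2 * m ≤ S.card := by
  classical
  set p1 : GridV n1 n2 n3 := (⟨0, by omega⟩, ⟨0, by omega⟩, ⟨0, by omega⟩) with hp1
  set p2 : GridV n1 n2 n3 := (⟨0, by omega⟩, ⟨1, by omega⟩, ⟨1, by omega⟩) with hp2
  set q1 : GridV n1 n2 n3 := (⟨0, by omega⟩, ⟨0, by omega⟩, ⟨1, by omega⟩) with hq1
  set q2 : GridV n1 n2 n3 := (⟨0, by omega⟩, ⟨1, by omega⟩, ⟨0, by omega⟩) with hq2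
  have hp : p1 ≠ p2 := by
    simp [hp1, hp2, Prod.ext_iff, Fin.ext_iff]
  have hq : q1 ≠ q2 := by
    simp [hq1, hq2, Prod.ext_iff, Fin.ext_iff]
  have hA := hS p1 p2 hp
  have hB := hS q1 q2 hq
  have hdisj : Disjoint (S.filter (fun w => gridResolves w p1 p2))
      (S.filter (fun w => gridResolves w q1 q2)) := by
    rw [Finset.disjoint_left]
    intro w hw1 hw2
    rw [Finset.mem_filter] at hw1 hw2
    have r1 := hw1.2
    have r2 := hw2.2
    simp only [hp1, hp2, hq1, hq2, gridResolves, gridDist] at r1 r2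
    push_cast at r1 r2
    omega
  have hunion : (S.filter (fun w => gridResolves w p1 p2)) ∪
      (S.filter (fun w => gridResolves w q1 q2)) ⊆ S :=
    Finset.union_subset (Finset.filter_subset _ _) (Finset.filter_subset _ _)
  have := Finset.card_union_of_disjoint hdisj
  have hle := Finset.card_le_card hunion
  omega


/-- For odd `k` with `2 ≤ k < α_m(n1,n2,n3)`, the `(k+1)`-metric dimension of the
3D grid equals `2k+2`. -/
theorem grid3D_kplus1_dim_odd (n1 n2 n3 k : ℕ)
    (h1 : 2 ≤ n1) (h2 : 2 ≤ n2) (h3 : 2 ≤ n3)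
    (hk : 2 ≤ k) (hko : Odd k) (hklt : k < alpham n1 n2 n3) :
    gridKMetricDim (k + 1) n1 n2 n3 = 2 * k + 2 := by
  classical
  obtain ⟨j, hj⟩ := hko
  set h := j + 1 with hh
  have hk1 : k + 1 = 2 * h := by omega
  have hsum : h ≤ n1 + n2 + n3 - 4 := by
    unfold alpham at hklt
    omega
  set t3 := min n3 h with ht3d
  set t2 := min (n2 - 2) (h - t3) with ht2d
  set t1 := h - t3 - t2 with ht1d
  have b3 : t3 ≤ n3 := by omega
  have b2 : t2 + 2 ≤ n2 := by omega
  have b1 : t1 + 2 ≤ n1 := by omega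
  have htt : t3 + t2 + t1 = h := by omega
  have ht3ge : 2 ≤ t3 := by omega
  set S0 := Finset.image (eMap n1 n2 n3 t1 t2 t3 b1 b2 b3 h2 h3) Finset.univ with hS0
  have hinj := eMap_injective n1 n2 n3 t1 t2 t3 b1 b2 b3 h2 h3
  have hcardS0 : S0.card ≤ 2 * k + 2 := by
    refine le_trans Finset.card_image_le ?_
    simp only [Finset.card_univ, Fintype.card_prod, Fintype.card_bool, Fintype.card_sum,
      Fintype.card_fin]
    omega
  have hgrid : 2 * k + 2 ≤ Fintype.card (GridV n1 n2 n3) := by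
    obtain ⟨a, rfl⟩ : ∃ a, n1 = 2 + a := ⟨n1 - 2, by omega⟩
    obtain ⟨b, rfl⟩ : ∃ b, n2 = 2 + b := ⟨n2 - 2, by omega⟩
    obtain ⟨c, rfl⟩ : ∃ c, n3 = 2 + c := ⟨n3 - 2, by omega⟩
    have hcard : Fintype.card (GridV (2+a) (2+b) (2+c)) = (2+a) * ((2+b) * (2+c)) := by
      simp [Fintype.card_prod]
    have expand : (2+a) * ((2+b) * (2+c))
        = 8 + 4*(a+b+c) + 2*(a*b) + 2*(b*c) + 2*(a*c) + a*b*c := by ring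
    unfold alpham at hklt
    omega
  obtain ⟨S, hsub, hcard⟩ := Finset.exists_superset_card_eq hcardS0 hgrid
  have hres : IsKResolvingSet (k + 1) S := by
    intro u v huv
    have hc := count_resolved n1 n2 n3 t1 t2 t3 b1 b2 b3 h2 h3 ht3ge u v huv
    have htrans : (S0.filter (fun w => gridResolves w u v)).card
        = (Finset.univ.filter
          (fun i => gridResolves (eMap n1 n2 n3 t1 t2 t3 b1 b2 b3 h2 h3 i) u v)).card := by
      rw [hS0, Finset.filter_image]
      exact Finset.card_image_of_injective _ hinj
    have hmono : (S0.filter (fun w => gridResolves w u v)).card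
        ≤ (S.filter (fun w => gridResolves w u v)).card :=
      Finset.card_le_card (Finset.filter_subset_filter _ hsub)
    omega
  have hmem : (2 * k + 2) ∈ {c | ∃ S : Finset (GridV n1 n2 n3),
      IsKResolvingSet (k + 1) S ∧ S.card = c} := ⟨S, hres, hcard⟩
  unfold gridKMetricDim
  apply le_antisymm
  · exact Nat.sInf_le hmem
  · refine le_csInf ⟨_, hmem⟩ ?_
    rintro c ⟨T, hT, rfl⟩
    have := lower_bound n1 n2 n3 (k + 1) h1 h2 h3 T hT
    omega
end

section
/- Let n1, n2, n3 ≥ 2 and let k be an integer with 2 ≤ k < α_M(n1,n2,n3). Then F(n1,n2,n3) is a (k+1)-resolving set of the 3D grid P_{n1}□P_{n2}□P_{n3}, and consequently dim_{k+1}(P_{n1}□P_{n2}□P_{n3}) ≤ n1·n2·n3 − (n1−2)(n2−2)(n3−2). -/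
namespace GridAux

lemma flip1 {n1 n2 n3 : ℕ} (x y : GridV n1 n2 n3) (hx1 : x.1.val ≠ y.1.val)
    (a a' : Fin n1) (b : Fin n2 × Fin n3)
    (hends : (a.val = 0 ∧ a'.val = n1 - 1) ∨ (a.val = n1 - 1 ∧ a'.val = 0))
    (H : gridDist (a, b) x = gridDist (a, b) y) :
    gridDist (a', b) x ≠ gridDist (a', b) y := by
  have b1 := x.1.isLt; have b2 := y.1.isLt; have b3 := a.isLt; have b4 := a'.isLt
  simp only [gridDist] at H ⊢
  generalize ((b.1.val : ℤ) - (x.2.1.val : ℤ)).natAbs = p2 at H ⊢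
  generalize ((b.1.val : ℤ) - (y.2.1.val : ℤ)).natAbs = q2 at H ⊢
  generalize ((b.2.val : ℤ) - (x.2.2.val : ℤ)).natAbs = p3 at H ⊢
  generalize ((b.2.val : ℤ) - (y.2.2.val : ℤ)).natAbs = q3 at H ⊢
  omega

lemma flip2 {n1 n2 n3 : ℕ} (x y : GridV n1 n2 n3) (hx2 : x.2.1.val ≠ y.2.1.val)
    (a : Fin n1) (b b' : Fin n2) (c : Fin n3)
    (hends : (b.val = 0 ∧ b'.val = n2 - 1) ∨ (b.val = n2 - 1 ∧ b'.val = 0))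
    (H : gridDist (a, b, c) x = gridDist (a, b, c) y) :
    gridDist (a, b', c) x ≠ gridDist (a, b', c) y := by
  have b1 := x.2.1.isLt; have b2 := y.2.1.isLt; have b3 := b.isLt; have b4 := b'.isLt
  simp only [gridDist] at H ⊢
  generalize ((a.val : ℤ) - (x.1.val : ℤ)).natAbs = p1 at H ⊢
  generalize ((a.val : ℤ) - (y.1.val : ℤ)).natAbs = q1 at H ⊢
  generalize ((c.val : ℤ) - (x.2.2.val : ℤ)).natAbs = p3 at H ⊢
  generalize ((c.val : ℤ) - (y.2.2.val : ℤ)).natAbs = q3 at H ⊢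
  omega

lemma slab1 {n1 n2 n3 : ℕ} (x y : GridV n1 n2 n3) (hx1 : x.1.val ≠ y.1.val)
    (h2 : x.2.1.val = y.2.1.val) (h3 : x.2.2.val = y.2.2.val)
    (w : GridV n1 n2 n3) (H : gridDist w x = gridDist w y) :
    2 * w.1.val = x.1.val + y.1.val := by
  have b1 := x.1.isLt; have b2 := y.1.isLt
  have e2 : ((x.2.1.val : ℤ)) = (y.2.1.val : ℤ) := by exact_mod_cast h2
  have e3 : ((x.2.2.val : ℤ)) = (y.2.2.val : ℤ) := by exact_mod_cast h3
  simp only [gridDist] at H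
  rw [e2, e3] at H
  omega

set_option maxHeartbeats 1000000 in
/-- Key lemma. If `x.1 ≠ y.1` and moreover either `x.2.1 ≠ y.2.1` or `x, y`
agree in both remaining coordinates, then the "tube" of boundary vertices
`w` with `w.1 ∈ {0, n1-1}` or `w.2.1 ∈ {0, n2-1}` contains at least
`n3 * (n1 + n2 - 2)` vertices resolving the pair `x, y`. -/
lemma tube3 {n1 n2 n3 : ℕ} (h1 : 2 ≤ n1) (h2 : 2 ≤ n2) (h3 : 2 ≤ n3)
    (x y : GridV n1 n2 n3) (hx1 : x.1.val ≠ y.1.val)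
    (hor : x.2.1.val ≠ y.2.1.val ∨ (x.2.1.val = y.2.1.val ∧ x.2.2.val = y.2.2.val)) :
    n3 * (n1 + n2 - 2) ≤
      ((gridBoundary n1 n2 n3).filter (fun w => gridResolves w x y)).card := by
  classical
  have h10 : 0 < n1 := by omega
  have h1n : n1 - 1 < n1 := by omega
  have h20 : 0 < n2 := by omega
  have h2n : n2 - 1 < n2 := by omega
  set E1 : Finset (Fin n1) := {⟨0, h10⟩, ⟨n1 - 1, h1n⟩} with hE1
  set E2 : Finset (Fin n2) := {⟨0, h20⟩, ⟨n2 - 1, h2n⟩} with hE2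
  have hE1mem : ∀ a : Fin n1, a ∈ E1 ↔ (a.val = 0 ∨ a.val = n1 - 1) := by
    intro a; rw [hE1]; simp [Fin.ext_iff]
  have hE2mem : ∀ a : Fin n2, a ∈ E2 ↔ (a.val = 0 ∨ a.val = n2 - 1) := by
    intro a; rw [hE2]; simp [Fin.ext_iff]
  have hE1card : E1.card = 2 := by
    rw [hE1, Finset.card_pair (by simp [Fin.ext_iff]; omega)]
  have hE2card : E2.card = 2 := by
    rw [hE2, Finset.card_pair (by simp [Fin.ext_iff]; omega)]
  set U : Finset (GridV n1 n2 n3) := E1 ×ˢ Finset.univ with hU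
  set W : Finset (GridV n1 n2 n3) := E1ᶜ ×ˢ (E2 ×ˢ Finset.univ) with hW
  have hUmem : ∀ w : GridV n1 n2 n3, w ∈ U ↔ (w.1.val = 0 ∨ w.1.val = n1 - 1) := by
    intro w; rw [hU, Finset.mem_product]; simp [hE1mem]
  have hWmem : ∀ w : GridV n1 n2 n3,
      w ∈ W ↔ (¬(w.1.val = 0 ∨ w.1.val = n1 - 1) ∧ (w.2.1.val = 0 ∨ w.2.1.val = n2 - 1)) := by
    intro w; rw [hW, Finset.mem_product, Finset.mem_product, Finset.mem_compl]
    simp [hE1mem, hE2mem]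
  have hUcard : U.card = 2 * (n2 * n3) := by
    rw [hU, Finset.card_product, hE1card]; simp
  have hWcard : W.card = (n1 - 2) * (2 * n3) := by
    rw [hW, Finset.card_product, Finset.card_product, Finset.card_compl, hE1card, hE2card]
    simp [mul_assoc]
  set GU := U.filter (fun w => gridResolves w x y) with hGU
  set BU := U.filter (fun w => ¬ gridResolves w x y) with hBU
  set GW := W.filter (fun w => gridResolves w x y) with hGW
  set BW := W.filter (fun w => ¬ gridResolves w x y) with hBW
  have hUsum : GU.card + BU.card = 2 * (n2 * n3) := by
    rw [hGU, hBU, Finset.card_filter_add_card_filter_not, hUcard]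
  have hWsum : GW.card + BW.card = (n1 - 2) * (2 * n3) := by
    rw [hGW, hBW, Finset.card_filter_add_card_filter_not, hWcard]
  -- injection on U : flip the first coordinate
  have hBUGU : BU.card ≤ GU.card := by
    apply Finset.card_le_card_of_injOn
      (fun w => ((if w.1.val = 0 then ⟨n1 - 1, h1n⟩ else ⟨0, h10⟩ : Fin n1), w.2))
    · intro w hw
      beta_reduce
      rw [Finset.mem_coe, hBU, Finset.mem_filter] at hw
      obtain ⟨hwU, hwr⟩ := hw
      rw [hUmem] at hwU
      rw [Finset.mem_coe, hGU, Finset.mem_filter]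
      constructor
      · rw [hUmem]; split <;> simp
      · rw [not_not] at hwr
        rcases hwU with h0 | h0
        · rw [if_pos h0]
          exact flip1 x y hx1 w.1 _ w.2 (Or.inl ⟨h0, rfl⟩) hwr
        · rw [if_neg (by omega)]
          exact flip1 x y hx1 w.1 _ w.2 (Or.inr ⟨h0, rfl⟩) hwr
    · intro a ha b hb hab
      simp only [Finset.mem_coe, hBU, Finset.mem_filter] at ha hb
      have ha1 := (hUmem a).1 ha.1
      have hb1 := (hUmem b).1 hb.1
      simp only [Prod.mk.injEq] at hab
      obtain ⟨hfst, hsnd⟩ := hab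
      have : a.1 = b.1 := by
        rw [Fin.ext_iff]
        split_ifs at hfst with hc1 hc2 hc2 <;>
          rw [Fin.ext_iff] at hfst <;> simp at hfst <;> omega
      exact Prod.ext this hsnd
  have hGUn : n2 * n3 ≤ GU.card := by omega
  have hGUB : GU ⊆ (gridBoundary n1 n2 n3).filter (fun w => gridResolves w x y) := by
    intro w hw
    rw [hGU, Finset.mem_filter] at hw
    rw [Finset.mem_filter]
    refine ⟨?_, hw.2⟩
    have := (hUmem w).1 hw.1
    simp [gridBoundary]; tauto
  have hGWB : GW ⊆ (gridBoundary n1 n2 n3).filter (fun w => gridResolves w x y) := by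
    intro w hw
    rw [hGW, Finset.mem_filter] at hw
    rw [Finset.mem_filter]
    refine ⟨?_, hw.2⟩
    have := (hWmem w).1 hw.1
    simp [gridBoundary]; tauto
  have hdisj : Disjoint GU GW := by
    rw [Finset.disjoint_left]
    intro w hwa hwb
    rw [hGU, Finset.mem_filter] at hwa
    rw [hGW, Finset.mem_filter] at hwb
    have := (hUmem w).1 hwa.1
    have := (hWmem w).1 hwb.1
    tauto
  have hcard_union : GU.card + GW.card ≤
      ((gridBoundary n1 n2 n3).filter (fun w => gridResolves w x y)).card := by
    rw [← Finset.card_union_of_disjoint hdisj]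
    exact Finset.card_le_card (Finset.union_subset hGUB hGWB)
  -- now bound GW.card from below, in two cases
  rcases hor with hx2 | ⟨hx2, hx3⟩
  · -- middle coordinate differs : flip the second coordinate
    have hBWGW : BW.card ≤ GW.card := by
      apply Finset.card_le_card_of_injOn
        (fun w => (w.1, (if w.2.1.val = 0 then ⟨n2 - 1, h2n⟩ else ⟨0, h20⟩ : Fin n2), w.2.2))
      · intro w hw
        beta_reduce
        rw [Finset.mem_coe, hBW, Finset.mem_filter] at hw
        obtain ⟨hwW, hwr⟩ := hw
        rw [hWmem] at hwW
        obtain ⟨hw1, hw2⟩ := hwW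
        rw [Finset.mem_coe, hGW, Finset.mem_filter]
        constructor
        · rw [hWmem]
          refine ⟨hw1, ?_⟩
          split <;> simp
        · rw [not_not] at hwr
          rcases hw2 with h0 | h0
          · rw [if_pos h0]
            exact flip2 x y hx2 w.1 w.2.1 _ w.2.2 (Or.inl ⟨h0, rfl⟩) hwr
          · rw [if_neg (by omega)]
            exact flip2 x y hx2 w.1 w.2.1 _ w.2.2 (Or.inr ⟨h0, rfl⟩) hwr
      · intro a ha b hb hab
        simp only [Finset.mem_coe, hBW, Finset.mem_filter] at ha hb
        have ha1 := (hWmem a).1 ha.1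
        have hb1 := (hWmem b).1 hb.1
        simp only [Prod.mk.injEq] at hab
        obtain ⟨h1', hmid, h3'⟩ := hab
        have : a.2.1 = b.2.1 := by
          rw [Fin.ext_iff]
          split_ifs at hmid with hc1 hc2 hc2 <;>
            rw [Fin.ext_iff] at hmid <;> simp at hmid <;> omega
        exact Prod.ext h1' (Prod.ext this h3')
    have hGWn : (n1 - 2) * n3 ≤ GW.card := by
      have : (n1 - 2) * (2 * n3) = 2 * ((n1 - 2) * n3) := by ring
      omega
    have : n3 * (n1 + n2 - 2) ≤ n2 * n3 + (n1 - 2) * n3 := by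
      have : n2 * n3 + (n1 - 2) * n3 = (n2 + (n1 - 2)) * n3 := by ring
      rw [this, mul_comm]
      exact Nat.mul_le_mul_right n3 (by omega)
    omega
  · -- x and y agree on coordinates 2 and 3 : BU is empty, BW is inside a slab
    have hBUempty : BU.card = 0 := by
      rw [Finset.card_eq_zero, hBU, Finset.filter_eq_empty_iff]
      intro w hw
      rw [not_not]
      have hw1 := (hUmem w).1 hw
      intro Heq
      have := slab1 x y hx1 hx2 hx3 w Heq
      have b1 := x.1.isLt; have b2 := y.1.isLt
      omega
    have hBWslab : BW.card ≤ 2 * n3 := by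
      have : BW.card ≤ (E2 ×ˢ (Finset.univ : Finset (Fin n3))).card := by
        apply Finset.card_le_card_of_injOn (fun w => w.2)
        · intro w hw
          rw [Finset.mem_coe, hBW, Finset.mem_filter] at hw
          have := (hWmem w).1 hw.1
          rw [Finset.mem_coe, Finset.mem_product]
          exact ⟨(hE2mem _).2 this.2, Finset.mem_univ _⟩
        · intro a ha b hb hab
          simp only [Finset.mem_coe, hBW, Finset.mem_filter] at ha hb
          have saq := slab1 x y hx1 hx2 hx3 a (not_not.mp ha.2)
          have sbq := slab1 x y hx1 hx2 hx3 b (not_not.mp hb.2)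
          have : a.1 = b.1 := by rw [Fin.ext_iff]; omega
          exact Prod.ext this hab
      rw [Finset.card_product, hE2card] at this
      simpa using this
    have key : n3 * (n1 + n2 - 2) ≤ 2 * (n2 * n3) + ((n1 - 2) * (2 * n3) - 2 * n3) := by
      have e1 : ((n1 - 2) * 2 - 2) * n3 = (n1 - 2) * (2 * n3) - 2 * n3 := by
        rw [Nat.sub_mul, mul_assoc]
      rw [← e1]
      have e2 : 2 * (n2 * n3) = (2 * n2) * n3 := by ring
      rw [e2, ← Nat.add_mul, mul_comm]
      exact Nat.mul_le_mul_right n3 (by omega)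
    omega

lemma card_transport {n1 n2 n3 m1 m2 m3 : ℕ} (e : GridV n1 n2 n3 → GridV m1 m2 m3)
    (hbij : Function.Bijective e)
    (hd : ∀ u v, gridDist (e u) (e v) = gridDist u v)
    (hb : ∀ w, e w ∈ gridBoundary m1 m2 m3 ↔ w ∈ gridBoundary n1 n2 n3)
    (x y : GridV n1 n2 n3) :
    ((gridBoundary n1 n2 n3).filter (fun w => gridResolves w x y)).card
      = ((gridBoundary m1 m2 m3).filter (fun w => gridResolves w (e x) (e y))).card := by
  apply Finset.card_bij (fun w _ => e w)
  · intro a ha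
    rw [Finset.mem_filter] at ha ⊢
    refine ⟨(hb a).2 ha.1, ?_⟩
    simpa only [gridResolves, hd] using ha.2
  · intro a _ b _ h
    exact hbij.1 h
  · intro b hbmem
    obtain ⟨a, rfl⟩ := hbij.2 b
    rw [Finset.mem_filter] at hbmem
    refine ⟨a, ?_, rfl⟩
    rw [Finset.mem_filter]
    refine ⟨(hb a).1 hbmem.1, ?_⟩
    simpa only [gridResolves, hd] using hbmem.2

lemma bij132 {n1 n2 n3 : ℕ} :
    Function.Bijective (fun w : GridV n1 n2 n3 => ((w.1, w.2.2, w.2.1) : GridV n1 n3 n2)) :=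
  Function.bijective_iff_has_inverse.mpr
    ⟨fun w => (w.1, w.2.2, w.2.1), fun _ => rfl, fun _ => rfl⟩

lemma bij213 {n1 n2 n3 : ℕ} :
    Function.Bijective (fun w : GridV n1 n2 n3 => ((w.2.1, w.1, w.2.2) : GridV n2 n1 n3)) :=
  Function.bijective_iff_has_inverse.mpr
    ⟨fun w => (w.2.1, w.1, w.2.2), fun _ => rfl, fun _ => rfl⟩

lemma bij231 {n1 n2 n3 : ℕ} :
    Function.Bijective (fun w : GridV n1 n2 n3 => ((w.2.1, w.2.2, w.1) : GridV n2 n3 n1)) :=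
  Function.bijective_iff_has_inverse.mpr
    ⟨fun w => (w.2.2, w.1, w.2.1), fun _ => rfl, fun _ => rfl⟩

lemma bij312 {n1 n2 n3 : ℕ} :
    Function.Bijective (fun w : GridV n1 n2 n3 => ((w.2.2, w.1, w.2.1) : GridV n3 n1 n2)) :=
  Function.bijective_iff_has_inverse.mpr
    ⟨fun w => (w.2.1, w.2.2, w.1), fun _ => rfl, fun _ => rfl⟩

lemma dist132 {n1 n2 n3 : ℕ} (u v : GridV n1 n2 n3) :
    gridDist ((u.1, u.2.2, u.2.1) : GridV n1 n3 n2) (v.1, v.2.2, v.2.1) = gridDist u v := by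
  simp only [gridDist]; ring

lemma dist213 {n1 n2 n3 : ℕ} (u v : GridV n1 n2 n3) :
    gridDist ((u.2.1, u.1, u.2.2) : GridV n2 n1 n3) (v.2.1, v.1, v.2.2) = gridDist u v := by
  simp only [gridDist]; ring

lemma dist231 {n1 n2 n3 : ℕ} (u v : GridV n1 n2 n3) :
    gridDist ((u.2.1, u.2.2, u.1) : GridV n2 n3 n1) (v.2.1, v.2.2, v.1) = gridDist u v := by
  simp only [gridDist]; ring

lemma dist312 {n1 n2 n3 : ℕ} (u v : GridV n1 n2 n3) :
    gridDist ((u.2.2, u.1, u.2.1) : GridV n3 n1 n2) (v.2.2, v.1, v.2.1) = gridDist u v := by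
  simp only [gridDist]; ring

lemma bd132 {n1 n2 n3 : ℕ} (w : GridV n1 n2 n3) :
    ((w.1, w.2.2, w.2.1) : GridV n1 n3 n2) ∈ gridBoundary n1 n3 n2 ↔ w ∈ gridBoundary n1 n2 n3 := by
  simp only [gridBoundary, Finset.mem_filter, Finset.mem_univ, true_and]; tauto

lemma bd213 {n1 n2 n3 : ℕ} (w : GridV n1 n2 n3) :
    ((w.2.1, w.1, w.2.2) : GridV n2 n1 n3) ∈ gridBoundary n2 n1 n3 ↔ w ∈ gridBoundary n1 n2 n3 := by
  simp only [gridBoundary, Finset.mem_filter, Finset.mem_univ, true_and]; tauto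

lemma bd231 {n1 n2 n3 : ℕ} (w : GridV n1 n2 n3) :
    ((w.2.1, w.2.2, w.1) : GridV n2 n3 n1) ∈ gridBoundary n2 n3 n1 ↔ w ∈ gridBoundary n1 n2 n3 := by
  simp only [gridBoundary, Finset.mem_filter, Finset.mem_univ, true_and]; tauto

lemma bd312 {n1 n2 n3 : ℕ} (w : GridV n1 n2 n3) :
    ((w.2.2, w.1, w.2.1) : GridV n3 n1 n2) ∈ gridBoundary n3 n1 n2 ↔ w ∈ gridBoundary n1 n2 n3 := by
  simp only [gridBoundary, Finset.mem_filter, Finset.mem_univ, true_and]; tauto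

/-- Main counting lemma: every distinct pair of vertices is resolved by at
least `α_M(n1,n2,n3)` boundary vertices. -/
lemma key {n1 n2 n3 : ℕ} (h1 : 2 ≤ n1) (h2 : 2 ≤ n2) (h3 : 2 ≤ n3)
    (x y : GridV n1 n2 n3) (hxy : x ≠ y) :
    alphaM n1 n2 n3 ≤ ((gridBoundary n1 n2 n3).filter (fun w => gridResolves w x y)).card := by
  have hA1 : alphaM n1 n2 n3 ≤ n1 * (n2 + n3 - 2) := min_le_left _ _
  have hA2 : alphaM n1 n2 n3 ≤ n2 * (n1 + n3 - 2) :=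
    le_trans (min_le_right _ _) (min_le_left _ _)
  have hA3 : alphaM n1 n2 n3 ≤ n3 * (n1 + n2 - 2) :=
    le_trans (min_le_right _ _) (min_le_right _ _)
  by_cases hc1 : x.1.val = y.1.val
  · by_cases hc2 : x.2.1.val = y.2.1.val
    · by_cases hc3 : x.2.2.val = y.2.2.val
      · exact absurd (Prod.ext (Fin.ext hc1) (Prod.ext (Fin.ext hc2) (Fin.ext hc3))) hxy
      · -- only third coordinate differs : use arrangement (3,1,2)
        rw [card_transport _ bij312 dist312 bd312 x y]
        refine le_trans ?_ (tube3 h3 h1 h2 _ _ hc3 (Or.inr ⟨hc1, hc2⟩))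
        calc alphaM n1 n2 n3 ≤ n2 * (n1 + n3 - 2) := hA2
        _ = n2 * (n3 + n1 - 2) := by rw [Nat.add_comm n1 n3]
    · by_cases hc3 : x.2.2.val = y.2.2.val
      · -- second differs, third equal : use arrangement (2,1,3)
        rw [card_transport _ bij213 dist213 bd213 x y]
        refine le_trans ?_ (tube3 h2 h1 h3 _ _ hc2 (Or.inr ⟨hc1, hc3⟩))
        calc alphaM n1 n2 n3 ≤ n3 * (n1 + n2 - 2) := hA3
        _ = n3 * (n2 + n1 - 2) := by rw [Nat.add_comm n1 n2]
      · -- second and third differ : use arrangement (2,3,1)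
        rw [card_transport _ bij231 dist231 bd231 x y]
        exact le_trans hA1 (tube3 h2 h3 h1 _ _ hc2 (Or.inl hc3))
  · by_cases hc2 : x.2.1.val = y.2.1.val
    · by_cases hc3 : x.2.2.val = y.2.2.val
      · -- only first coordinate differs
        exact le_trans hA3 (tube3 h1 h2 h3 x y hc1 (Or.inr ⟨hc2, hc3⟩))
      · -- first and third differ : use arrangement (1,3,2)
        rw [card_transport _ bij132 dist132 bd132 x y]
        exact le_trans hA2 (tube3 h1 h3 h2 _ _ hc1 (Or.inl hc3))
    · -- first and second differ
      exact le_trans hA3 (tube3 h1 h2 h3 x y hc1 (Or.inl hc2))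

set_option maxHeartbeats 800000 in
lemma boundary_card {n1 n2 n3 : ℕ} (h1 : 2 ≤ n1) (h2 : 2 ≤ n2) (h3 : 2 ≤ n3) :
    (gridBoundary n1 n2 n3).card = n1 * n2 * n3 - (n1 - 2) * (n2 - 2) * (n3 - 2) := by
  classical
  have h10 : 0 < n1 := by omega
  have h20 : 0 < n2 := by omega
  have h30 : 0 < n3 := by omega
  set E1 : Finset (Fin n1) := {⟨0, h10⟩, ⟨n1 - 1, by omega⟩} with hE1
  set E2 : Finset (Fin n2) := {⟨0, h20⟩, ⟨n2 - 1, by omega⟩} with hE2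
  set E3 : Finset (Fin n3) := {⟨0, h30⟩, ⟨n3 - 1, by omega⟩} with hE3
  have hcompl : (gridBoundary n1 n2 n3)ᶜ = E1ᶜ ×ˢ (E2ᶜ ×ˢ E3ᶜ) := by
    ext ⟨a, b, c⟩
    rw [Finset.mem_compl, Finset.mem_product, Finset.mem_product,
      Finset.mem_compl, Finset.mem_compl, Finset.mem_compl]
    simp only [gridBoundary, Finset.mem_filter, Finset.mem_univ, true_and,
      hE1, hE2, hE3, Finset.mem_insert, Finset.mem_singleton, Fin.ext_iff]
    push_neg
    tauto
  have hE1card : E1.card = 2 := by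
    rw [hE1, Finset.card_pair (by simp [Fin.ext_iff]; omega)]
  have hE2card : E2.card = 2 := by
    rw [hE2, Finset.card_pair (by simp [Fin.ext_iff]; omega)]
  have hE3card : E3.card = 2 := by
    rw [hE3, Finset.card_pair (by simp [Fin.ext_iff]; omega)]
  have hcc : (gridBoundary n1 n2 n3)ᶜ.card = (n1 - 2) * ((n2 - 2) * (n3 - 2)) := by
    rw [hcompl, Finset.card_product, Finset.card_product, Finset.card_compl,
      Finset.card_compl, Finset.card_compl, hE1card, hE2card, hE3card]
    simp
  have htot := Finset.card_add_card_compl (gridBoundary n1 n2 n3)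
  have hct : Fintype.card (GridV n1 n2 n3) = n1 * n2 * n3 := by
    simp [mul_assoc]
  rw [hct] at htot
  have e1 : n1 * n2 * n3 = n1 * (n2 * n3) := by ring
  have e2 : (n1 - 2) * (n2 - 2) * (n3 - 2) = (n1 - 2) * ((n2 - 2) * (n3 - 2)) := by ring
  omega

end GridAux

/-- If `2 ≤ k < α_M(n1,n2,n3)`, then the boundary `F(n1,n2,n3)` is a `(k+1)`-resolving
set of the 3D grid, and consequently the `(k+1)`-metric dimension is at most
`n1*n2*n3 − (n1−2)(n2−2)(n3−2)`. -/
theorem grid3D_boundary_kplus1_resolving (n1 n2 n3 k : ℕ)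
    (h1 : 2 ≤ n1) (h2 : 2 ≤ n2) (h3 : 2 ≤ n3)
    (hk : 2 ≤ k) (hklt : k < alphaM n1 n2 n3) :
    IsKResolvingSet (k + 1) (gridBoundary n1 n2 n3) ∧
    gridKMetricDim (k + 1) n1 n2 n3 ≤
      n1 * n2 * n3 - (n1 - 2) * (n2 - 2) * (n3 - 2) := by
  have hres : IsKResolvingSet (k + 1) (gridBoundary n1 n2 n3) := by
    intro u v huv
    exact le_trans (by omega) (GridAux.key h1 h2 h3 u v huv)
  refine ⟨hres, ?_⟩
  have := Nat.sInf_le (s := { c | ∃ S : Finset (GridV n1 n2 n3),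
      IsKResolvingSet (k + 1) S ∧ S.card = c })
    (m := (gridBoundary n1 n2 n3).card) ⟨gridBoundary n1 n2 n3, hres, rfl⟩
  rw [GridAux.boundary_card h1 h2 h3] at this
  exact this
end
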